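/- arXiv:1506.06290 — 4 statements merged into one kernel-verified Lean document; each statement's English description precedes it below -/
import Mathlib

section
/- Let V be a complex Hilbert space, G a group, and ρ : G →* (V ≃ₗᵢ[ℂ] V) a unitary representation of G on V. Let K be a subgroup of G, let V^K = {v ∈ V : ρ(k)v = v for all k ∈ K} (a closed subspace of V), and let P denote the orthogonal projection of V onto V^K. Assume: (1) V^K is G-cyclic, i.e. the closed linear span of {ρ(g)v : g ∈ G, v ∈ V^K} equals V; (2) the only closed subspaces of V^K invariant under every compression operator v ↦ P(ρ(g)v) (for g ∈ G) are {0} and V^K. Then V is an irreducible G-representation: every closed subspace of V invariant under ρ(g) for all g ∈ G equals {0} or V. -/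
open scoped InnerProductSpace

/-- **Proposition 2.1 (Hecke-algebra-free form).**
Let `V` be a complex Hilbert space, `G` a group, `ρ` a unitary representation of `G` on `V`,
`K ≤ G` a subgroup, `VK = V^K` the (closed) subspace of `K`-fixed vectors, and `P` the
orthogonal projection onto `VK`.  If `V^K` is `G`-cyclic and the only closed subspaces
of `V^K` invariant under all the compressions `v ↦ P (ρ g v)` are `0` and `V^K`, then
`V` is irreducible. -/
theorem boundary_rep_irreducible_of_cyclic_and_hecke_irreducible
    {V : Type*} [NormedAddCommGroup V] [InnerProductSpace ℂ V] [CompleteSpace V]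
    {G : Type*} [Group G] (ρ : G →* (V ≃ₗᵢ[ℂ] V)) (K : Subgroup G)
    (VK : Submodule ℂ V) [VK.HasOrthogonalProjection]
    (hVK : ∀ v : V, v ∈ VK ↔ ∀ k ∈ K, ρ k v = v)
    (hcyclic :
      (Submodule.span ℂ {x : V | ∃ g : G, ∃ v ∈ VK, x = ρ g v}).topologicalClosure = ⊤)
    (hhecke : ∀ U : Submodule ℂ V, IsClosed (U : Set V) → U ≤ VK →
      (∀ g : G, ∀ u ∈ U, ((VK.orthogonalProjectionOnto (ρ g u)) : V) ∈ U) →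
      U = ⊥ ∨ U = VK) :
    ∀ U : Submodule ℂ V, IsClosed (U : Set V) → (∀ g : G, ∀ v ∈ U, ρ g v ∈ U) →
      U = ⊥ ∨ U = ⊤ := by
  intro U hUclosed hUinv
  haveI : CompleteSpace U := hUclosed.completeSpace_coe
  -- basic facts about the unitary representation
  have happ : ∀ (g h : G) (x : V), ρ g (ρ h x) = ρ (g * h) x := by
    intro g h x
    simp [map_mul]
  have hinner : ∀ (g : G) (x y : V), ⟪ρ g x, y⟫_ℂ = ⟪x, ρ g⁻¹ y⟫_ℂ := by
    intro g x y
    have h1 : ρ g (ρ g⁻¹ y) = y := by rw [happ]; simp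
    calc ⟪ρ g x, y⟫_ℂ = ⟪ρ g x, ρ g (ρ g⁻¹ y)⟫_ℂ := by rw [h1]
      _ = ⟪x, ρ g⁻¹ y⟫_ℂ := (ρ g).inner_map_map x (ρ g⁻¹ y)
  have hinner' : ∀ (g : G) (x y : V), ⟪x, ρ g y⟫_ℂ = ⟪ρ g⁻¹ x, y⟫_ℂ := by
    intro g x y
    have h1 : ρ g (ρ g⁻¹ x) = x := by rw [happ]; simp
    calc ⟪x, ρ g y⟫_ℂ = ⟪ρ g (ρ g⁻¹ x), ρ g y⟫_ℂ := by rw [h1]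
      _ = ⟪ρ g⁻¹ x, y⟫_ℂ := (ρ g).inner_map_map _ _
  -- Uᗮ is invariant
  have hUperp : ∀ g : G, ∀ x ∈ Uᗮ, ρ g x ∈ Uᗮ := by
    intro g x hx
    intro u hu
    rw [hinner' g u x]
    exact hx _ (hUinv g⁻¹ u hu)
  -- key step: the projection of an element of U onto VK stays in U
  have hPU : ∀ u ∈ U, ((VK.orthogonalProjectionOnto u : V)) ∈ U := by
    intro u hu
    -- Step 1: U.orthogonalProjectionOnto maps VK into VK
    have step1 : ∀ v ∈ VK, ((U.orthogonalProjectionOnto v : V)) ∈ VK := by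
      intro v hv
      rw [hVK]
      intro k hk
      have hfix : ρ k v = v := (hVK v).1 hv k hk
      have h1 : (U.orthogonalProjectionOnto v : V) = ρ k (U.orthogonalProjectionOnto v) := by
        apply Submodule.eq_starProjection_of_mem_of_inner_eq_zero
        · exact hUinv k _ (U.orthogonalProjectionOnto v).2
        · intro w hw
          have : v - ρ k (U.orthogonalProjectionOnto v) = ρ k (v - U.orthogonalProjectionOnto v) := by
            rw [map_sub, hfix]
          rw [this, hinner]
          exact Submodule.starProjection_inner_eq_zero v _ (hUinv k⁻¹ w hw)
      exact h1.symm
    -- Step 2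
    set w : V := (VK.orthogonalProjectionOnto u : V) with hw
    have hwVK : w ∈ VK := (VK.orthogonalProjectionOnto u).2
    have hQu : (U.orthogonalProjectionOnto u : V) = u := Submodule.starProjection_eq_self_iff.2 hu
    have key : (VK.orthogonalProjectionOnto u : V) = (U.orthogonalProjectionOnto w : V) := by
      apply Submodule.eq_starProjection_of_mem_of_inner_eq_zero
      · exact step1 w hwVK
      · intro z hz
        have hdec : u - (U.orthogonalProjectionOnto w : V) = (U.orthogonalProjectionOnto (u - w) : V) := by
          rw [map_sub, Submodule.coe_sub, hQu]
        rw [hdec, ← Submodule.starProjection_apply, Submodule.inner_starProjection_left_eq_right]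
        have : (U.orthogonalProjectionOnto z : V) ∈ VK := step1 z hz
        exact Submodule.starProjection_inner_eq_zero u _ this
    show (VK.orthogonalProjectionOnto u : V) ∈ U
    rw [key]
    exact (U.orthogonalProjectionOnto w).2
  -- VK is closed
  have hVKclosed : IsClosed (VK : Set V) := by
    have : (VK : Set V) = ⋂ k ∈ K, {v : V | ρ k v = v} := by
      ext v
      simp only [Set.mem_iInter, Set.mem_setOf_eq, SetLike.mem_coe, hVK]
    rw [this]
    exact isClosed_biInter fun k _ => isClosed_eq (ρ k).continuous continuous_id
  -- apply the Hecke irreducibility hypothesis to W = U ⊓ VK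
  have hW := hhecke (U ⊓ VK) (hUclosed.inter hVKclosed) inf_le_right ?_
  · rcases hW with hW | hW
    · -- U ⊓ VK = ⊥ : then U ⊥ VK, so VK ≤ Uᗮ and cyclicity forces U = ⊥
      left
      have hperp : VK ≤ Uᗮ := by
        intro v hv
        intro u hu
        have h0 : (VK.orthogonalProjectionOnto u : V) = 0 := by
          have hmem : (VK.orthogonalProjectionOnto u : V) ∈ U ⊓ VK :=
            ⟨hPU u hu, (VK.orthogonalProjectionOnto u).2⟩
          rw [hW] at hmem
          exact hmem
        have huperp : u ∈ VKᗮ := Submodule.orthogonalProjectionOnto_eq_zero_iff.1 (by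
          ext; exact h0)
        rw [← inner_eq_zero_symm]; exact huperp v hv
      have hspan : Submodule.span ℂ {x : V | ∃ g : G, ∃ v ∈ VK, x = ρ g v} ≤ Uᗮ := by
        rw [Submodule.span_le]
        rintro x ⟨g, v, hv, rfl⟩
        exact hUperp g v (hperp hv)
      have htop : Uᗮ = ⊤ := by
        have := Submodule.topologicalClosure_minimal _ hspan U.isClosed_orthogonal
        rw [hcyclic] at this
        exact top_unique this
      rw [eq_bot_iff]
      intro u hu
      have : u ∈ Uᗮ := htop ▸ Submodule.mem_top
      have : ⟪u, u⟫_ℂ = 0 := this u hu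
      simpa using inner_self_eq_zero.1 this
    · -- U ⊓ VK = VK : then VK ≤ U and cyclicity forces U = ⊤
      right
      have hVKle : VK ≤ U := by rw [← hW]; exact inf_le_left
      have hspan : Submodule.span ℂ {x : V | ∃ g : G, ∃ v ∈ VK, x = ρ g v} ≤ U := by
        rw [Submodule.span_le]
        rintro x ⟨g, v, hv, rfl⟩
        exact hUinv g v (hVKle hv)
      have := Submodule.topologicalClosure_minimal _ hspan hUclosed
      rw [hcyclic] at this
      exact top_unique this
  · intro g u hu
    exact ⟨hPU _ (hUinv g u hu.1), (VK.orthogonalProjectionOnto (ρ g u)).2⟩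
end

section
/- Let (W,S) be a right-angled Coxeter system, let s ∈ S, and let u, w ∈ W satisfy ℓ(s*u) < ℓ(u) and ℓ(s*w) > ℓ(w). Then s ∈ P(1|u, s*w), s ∉ P(1|s*u, w), and conjugation by s maps P(1|u, s*w) onto the disjoint union P(1|s*u, w) ∪ {s}: one has {s*c*s : c ∈ P(1|u, s*w)} = P(1|s*u, w) ∪ {s}. Equivalently, c ↦ s*c*s is a bijection from P(1|u, s*w) \ {s} onto P(1|s*u, w). -/
/-- A Coxeter matrix is *right-angled* if any two distinct generators either commute
(`M i j = 2`) or generate an infinite dihedral group (`M i j = 0`). -/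
def CoxeterMatrix.IsRightAngled {B : Type*} (M : CoxeterMatrix B) : Prop :=
  ∀ i j : B, i ≠ j → M i j = 2 ∨ M i j = 0

/-- `sepSet cs u w` is the set `P(1|u,w)` of reflections separating `1` from both
`u` and `w`, i.e. the common left inversions of `u` and `w`. -/
def sepSet {B W : Type*} [Group W] {M : CoxeterMatrix B} (cs : CoxeterSystem M W)
    (u w : W) : Set W :=
  {t | cs.IsReflection t ∧ cs.length (t * u) < cs.length u ∧
    cs.length (t * w) < cs.length w}

/-!
`W` acts on `W × ℤˣ` with `s i` sending `(x, ε)` to `(s i * x * s i, ±ε)`, the sign flipping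
exactly at `x = s i`. For a right-angled system the Coxeter relations for these permutations are
immediate, since distinct generators either commute or satisfy no relation. Following `(t, 1)`
along a reduced word shows that the sign `η(w, t)` of `w⁻¹ • (t, 1)` is `-1` exactly when the
reflection `t` is a left inversion of `w` (the strong exchange condition). The recursion
`η(s * g, x) = ±η(g, s * x * s)`, with the sign flipped only at `x = s`, then says that a
reflection `t ≠ s` is a left inversion of `g` iff `s * t * s` is one of `s * g`. Applied to
`g = u` and `g = s * w` this matches `P(1|u,s*w) \ {s}` with `P(1|s*u,w)`, and conjugation by
`s` fixes `s`.
-/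

theorem Function.Involutive.image_eq_union_singleton {α : Type*} {f : α → α}
    (hf : Function.Involutive f) {s t : Set α} {a : α} (hfa : f a = a) (ha : a ∈ s)
    (hst : ∀ x, x ≠ a → (f x ∈ t ↔ x ∈ s)) :
    f '' s = t ∪ {a} := by
  rw [hf.image_eq_preimage_symm]
  ext x
  by_cases hx : x = a
  · simp [hx, hfa, ha]
  · have hfx : f x ≠ a := fun h => hx (by rw [← hf x, h, hfa])
    simp [hx, ← hst (f x) hfx, hf x]

theorem Set.bijOn_sdiff_singleton {α β : Type*} {f : α → β} (hf : f.Injective) {s : Set α}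
    {t : Set β} {a : α} (h : f '' s = t ∪ {f a}) (ha : f a ∉ t) :
    Set.BijOn f (s \ {a}) t := by
  have himage : f '' (s \ {a}) = t := by
    rw [Set.image_sdiff hf, h, Set.image_singleton, Set.union_singleton,
      Set.insert_sdiff_self_of_notMem ha]
  exact himage ▸ hf.injOn.bijOn_image

section Involution

variable {G : Type*} [Group G] {a b : G}

theorem conj_conj_of_mul_self_eq_one (ha : a * a = 1) (x : G) : a * (a * x * a) * a = x := by
  simp [mul_assoc, ← mul_assoc a a, ha]

theorem involutive_conj_of_mul_self_eq_one (ha : a * a = 1) : Function.Involutive (a * · * a) :=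
  conj_conj_of_mul_self_eq_one ha

theorem conj_eq_iff_of_mul_self_eq_one (ha : a * a = 1) {x y : G} :
    a * x * a = y ↔ x = a * y * a := by
  constructor <;> rintro rfl <;> simp [conj_conj_of_mul_self_eq_one ha]

theorem commute_of_mul_self_eq_one (ha : a * a = 1) (hb : b * b = 1) (hab : (a * b) ^ 2 = 1) :
    Commute a b := by
  have hab' : a * b * (a * b) = 1 := by rwa [← pow_two]
  calc a * b = (a * b)⁻¹ := eq_inv_of_mul_eq_one_left hab'
    _ = b * a := by rw [mul_inv_rev, inv_eq_of_mul_eq_one_right ha, inv_eq_of_mul_eq_one_right hb]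

theorem conj_eq_self_iff_of_mul_self_eq_one (ha : a * a = 1) {x : G} : a * x * a = a ↔ x = a := by
  rw [conj_eq_iff_of_mul_self_eq_one ha, ha, one_mul]

variable [DecidableEq G]

def signedConjPerm (a : G) (ha : a * a = 1) : Equiv.Perm (G × ℤˣ) :=
  Function.Involutive.toPerm (fun p => (a * p.1 * a, if p.1 = a then -p.2 else p.2)) <| by
    rintro ⟨x, e⟩
    by_cases hx : x = a <;>
      simp [hx, conj_conj_of_mul_self_eq_one ha, conj_eq_self_iff_of_mul_self_eq_one ha]

@[simp]
theorem signedConjPerm_apply (ha : a * a = 1) (x : G) (e : ℤˣ) :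
    signedConjPerm a ha (x, e) = (a * x * a, if x = a then -e else e) :=
  rfl

theorem signedConjPerm_mul_self (ha : a * a = 1) :
    signedConjPerm a ha * signedConjPerm a ha = 1 :=
  Equiv.ext fun _ => Function.Involutive.toPerm_involutive _ _

theorem commute_signedConjPerm (ha : a * a = 1) (hb : b * b = 1) (hab : Commute a b) :
    Commute (signedConjPerm a ha) (signedConjPerm b hb) := by
  refine Equiv.ext fun ⟨x, e⟩ => Prod.ext ?_ ?_
  · change a * (b * x * b) * a = b * (a * x * a) * b
    simp only [← mul_assoc, hab.eq]
    simp only [mul_assoc, hab.eq]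
  · have hbab : b * a * b = a := by rw [hab.symm.eq, mul_assoc, hb, mul_one]
    have haba : a * b * a = b := by rw [hab.eq, mul_assoc, ha, mul_one]
    simp only [Equiv.Perm.mul_apply, signedConjPerm_apply, conj_eq_iff_of_mul_self_eq_one ha,
      conj_eq_iff_of_mul_self_eq_one hb, hbab, haba]
    split_ifs <;> simp_all

end Involution

namespace CoxeterSystem

variable {B W : Type*} [Group W] {M : CoxeterMatrix B} (cs : CoxeterSystem M W)

theorem isLiftable_signedConjPerm [DecidableEq W] (hra : M.IsRightAngled) :
    M.IsLiftable fun i => signedConjPerm (cs.simple i) (cs.simple_mul_simple_self i) := by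
  intro i j
  rcases eq_or_ne i j with rfl | hij
  · rw [M.diagonal, pow_one, signedConjPerm_mul_self]
  rcases hra i j hij with hM | hM
  · have hij : Commute (cs.simple i) (cs.simple j) :=
      commute_of_mul_self_eq_one (cs.simple_mul_simple_self i) (cs.simple_mul_simple_self j)
        (hM ▸ cs.simple_mul_simple_pow i j)
    rw [hM, (commute_signedConjPerm _ _ hij).mul_pow, pow_two, pow_two,
      signedConjPerm_mul_self, signedConjPerm_mul_self, mul_one]
  · rw [hM, pow_zero]

section SignRep

variable [DecidableEq W] (hra : M.IsRightAngled)

def signRep : W →* Equiv.Perm (W × ℤˣ) :=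
  cs.lift ⟨_, cs.isLiftable_signedConjPerm hra⟩

theorem signRep_simple (i : B) :
    cs.signRep hra (cs.simple i) = signedConjPerm (cs.simple i) (cs.simple_mul_simple_self i) :=
  cs.lift_apply_simple _ i

theorem signRep_apply (v x : W) (e : ℤˣ) :
    cs.signRep hra v (x, e) = (v * x * v⁻¹, e * (cs.signRep hra v (x, 1)).2) := by
  induction v using cs.simple_induction_left generalizing x e with
  | one => simp
  | mul_simple_left w i ih =>
    rw [map_mul, Equiv.Perm.mul_apply, Equiv.Perm.mul_apply, ih, ih x 1, signRep_simple,
      signedConjPerm_apply, signedConjPerm_apply, mul_inv_rev, cs.inv_simple]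
    split_ifs <;> simp [mul_assoc]

theorem signRep_apply_neg (v x : W) (e : ℤˣ) :
    cs.signRep hra v (x, -e) = ((cs.signRep hra v (x, e)).1, -(cs.signRep hra v (x, e)).2) := by
  simp [signRep_apply cs hra v x (-e), signRep_apply cs hra v x e]

theorem signRep_self_of_isReflection {t : W} (ht : cs.IsReflection t) (e : ℤˣ) :
    cs.signRep hra t (t, e) = (t, -e) := by
  obtain ⟨v, i, rfl⟩ := ht
  set p := cs.signRep hra v⁻¹ (v * cs.simple i * v⁻¹, e) with hp_def
  have hp : p.1 = cs.simple i := by simp [p, signRep_apply, mul_assoc]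
  have hvp : cs.signRep hra v p = (v * cs.simple i * v⁻¹, e) := by
    rw [hp_def, ← Equiv.Perm.mul_apply, ← map_mul, mul_inv_cancel, map_one,
      Equiv.Perm.one_apply]
  have hsp : cs.signRep hra (cs.simple i) p = (p.1, -p.2) := by
    rw [signRep_simple, ← Prod.mk.eta (p := p), hp]
    simp [cs.simple_mul_simple_self]
  calc cs.signRep hra (v * cs.simple i * v⁻¹) (v * cs.simple i * v⁻¹, e)
      = cs.signRep hra v (cs.signRep hra (cs.simple i) p) := by simp [p]
    _ = (v * cs.simple i * v⁻¹, -e) := by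
      rw [hsp, signRep_apply_neg, ← Prod.mk.eta (p := p), hvp]

def inversionSign (w t : W) : ℤˣ :=
  (cs.signRep hra w⁻¹ (t, 1)).2

theorem inversionSign_simple_mul (i : B) (g x : W) :
    cs.inversionSign hra (cs.simple i * g) x =
      (if x = cs.simple i then -1 else 1) *
        cs.inversionSign hra g (cs.simple i * x * cs.simple i) := by
  rw [inversionSign, mul_inv_rev, cs.inv_simple, map_mul, Equiv.Perm.mul_apply, signRep_simple,
    signedConjPerm_apply, signRep_apply, inversionSign]

theorem inversionSign_wordProd_of_notMem {ω : List B} {t : W} (ht : t ∉ cs.leftInvSeq ω) :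
    cs.inversionSign hra (cs.wordProd ω) t = 1 := by
  induction ω generalizing t with
  | nil => simp [inversionSign]
  | cons i ω ih =>
    simp only [leftInvSeq, List.mem_cons, List.mem_map, not_or, not_exists, not_and] at ht
    have hconj : cs.simple i * t * cs.simple i ∉ cs.leftInvSeq ω := fun h =>
      ht.2 _ h (by simp [MulAut.conj_apply, cs.inv_simple,
        conj_conj_of_mul_self_eq_one (cs.simple_mul_simple_self i)])
    rw [wordProd_cons, inversionSign_simple_mul, if_neg ht.1, ih hconj, mul_one]

theorem isLeftInversion_of_inversionSign_eq_neg_one {w t : W}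
    (h : cs.inversionSign hra w t = -1) : cs.IsLeftInversion w t := by
  obtain ⟨ω, hω, rfl⟩ := cs.exists_isReduced w
  by_contra hnot
  have hmem : t ∉ cs.leftInvSeq ω := fun hmem =>
    hnot (cs.isLeftInversion_of_mem_leftInvSeq hω hmem)
  rw [inversionSign_wordProd_of_notMem cs hra hmem] at h
  exact absurd h (by decide)

theorem inversionSign_mul_left_self {t : W} (ht : cs.IsReflection t) (w : W) :
    cs.inversionSign hra (t * w) t = -cs.inversionSign hra w t := by
  rw [inversionSign, mul_inv_rev, ht.inv, map_mul, Equiv.Perm.mul_apply,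
    signRep_self_of_isReflection cs hra ht, signRep_apply, neg_one_mul, inversionSign]

theorem isLeftInversion_iff_inversionSign {t : W} (ht : cs.IsReflection t) (w : W) :
    cs.IsLeftInversion w t ↔ cs.inversionSign hra w t = -1 := by
  refine ⟨fun h => ?_, cs.isLeftInversion_of_inversionSign_eq_neg_one hra⟩
  rcases Int.units_eq_one_or (cs.inversionSign hra w t) with h1 | h1
  · have := cs.isLeftInversion_of_inversionSign_eq_neg_one hra
      (by rw [inversionSign_mul_left_self cs hra ht, h1] : cs.inversionSign hra (t * w) t = -1)
    rw [IsLeftInversion, ← mul_assoc, ht.mul_self, one_mul] at this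
    exact absurd h.2 (lt_asymm this.2)
  · exact h1

end SignRep

theorem isLeftInversion_simple_mul_conj_iff (hra : M.IsRightAngled) {i : B} {t : W}
    (hti : t ≠ cs.simple i) (g : W) :
    cs.IsLeftInversion (cs.simple i * g) (cs.simple i * t * cs.simple i) ↔
      cs.IsLeftInversion g t := by
  classical
  have hconj : cs.IsReflection (cs.simple i * t * cs.simple i) ↔ cs.IsReflection t := by
    simpa only [cs.inv_simple] using cs.isReflection_conj_iff (cs.simple i) t
  by_cases ht : cs.IsReflection t
  · rw [isLeftInversion_iff_inversionSign cs hra (hconj.mpr ht),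
      isLeftInversion_iff_inversionSign cs hra ht, inversionSign_simple_mul,
      conj_conj_of_mul_self_eq_one (cs.simple_mul_simple_self i),
      if_neg (mt (conj_eq_self_iff_of_mul_self_eq_one (cs.simple_mul_simple_self i)).mp hti),
      one_mul]
  · exact iff_of_false (fun h => ht (hconj.mp h.1)) (fun h => ht h.1)

theorem mem_sepSet_iff {u w t : W} :
    t ∈ sepSet cs u w ↔ cs.IsLeftInversion u t ∧ cs.IsLeftInversion w t := by
  simp only [sepSet, IsLeftInversion, Set.mem_ofPred_eq]
  tauto

theorem conj_mem_sepSet_simple_mul_iff (hra : M.IsRightAngled) {i : B} {t : W}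
    (hti : t ≠ cs.simple i) (u w : W) :
    cs.simple i * t * cs.simple i ∈ sepSet cs (cs.simple i * u) w ↔
      t ∈ sepSet cs u (cs.simple i * w) := by
  have hw := cs.isLeftInversion_simple_mul_conj_iff hra hti (cs.simple i * w)
  rw [simple_mul_simple_cancel_left] at hw
  rw [mem_sepSet_iff, mem_sepSet_iff, cs.isLeftInversion_simple_mul_conj_iff hra hti, hw]

end CoxeterSystem

/-- **Case 2 of the proof of Proposition 5.1:** if `ℓ(s*u) < ℓ(u)` and
`ℓ(s*w) > ℓ(w)`, then `s ∈ P(1|u,s*w)`, `s ∉ P(1|s*u,w)`, and conjugation by `s`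
maps `P(1|u,s*w)` onto the disjoint union `P(1|s*u,w) ∪ {s}`; equivalently,
`c ↦ s*c*s` is a bijection from `P(1|u,s*w) \ {s}` onto `P(1|s*u,w)`. -/
theorem conj_sepSet_eq_union_simple
    {B W : Type*} [Group W] {M : CoxeterMatrix B} (cs : CoxeterSystem M W)
    (hra : M.IsRightAngled) (i : B) (u w : W)
    (hsu : cs.length (cs.simple i * u) < cs.length u)
    (hsw : cs.length w < cs.length (cs.simple i * w)) :
    cs.simple i ∈ sepSet cs u (cs.simple i * w) ∧
    cs.simple i ∉ sepSet cs (cs.simple i * u) w ∧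
    (fun c => cs.simple i * c * cs.simple i) '' sepSet cs u (cs.simple i * w) =
      sepSet cs (cs.simple i * u) w ∪ {cs.simple i} ∧
    Set.BijOn (fun c => cs.simple i * c * cs.simple i)
      (sepSet cs u (cs.simple i * w) \ {cs.simple i})
      (sepSet cs (cs.simple i * u) w) := by
  have hs : cs.simple i * cs.simple i = 1 := cs.simple_mul_simple_self i
  have hfix : cs.simple i * cs.simple i * cs.simple i = cs.simple i := by rw [hs, one_mul]
  have hmem : cs.simple i ∈ sepSet cs u (cs.simple i * w) :=
    ⟨cs.isReflection_simple i, hsu, by rwa [cs.simple_mul_simple_cancel_left]⟩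
  have hnotMem : cs.simple i ∉ sepSet cs (cs.simple i * u) w := fun h =>
    lt_asymm hsu (by simpa only [cs.simple_mul_simple_cancel_left] using h.2.1)
  have himage := (involutive_conj_of_mul_self_eq_one hs).image_eq_union_singleton hfix hmem
    fun t ht => cs.conj_mem_sepSet_simple_mul_iff hra ht u w
  refine ⟨hmem, hnotMem, himage, ?_⟩
  exact Set.bijOn_sdiff_singleton (involutive_conj_of_mul_self_eq_one hs).injective
    (by simpa only [hfix] using himage) (by simpa only [hfix] using hnotMem)
end

section
/- Let (W,S) be a right-angled Coxeter system, let s ∈ S, and let u, w ∈ W satisfy ℓ(s*u) < ℓ(u) and ℓ(s*w) > ℓ(w). Then the map h ↦ h ∪ {s} is a bijection from the set of antichains of P(1|u,w) onto the set of antichains of P(1|u,s*w) containing s. Moreover, for corresponding antichains k = h ∪ {s}: #k = #h + 1; ht(k) = ht(h) + 1 (heights computed in P(1|u,s*w) and in P(1|u,w) respectively); and s·(∏_{t∈k} t) = ∏_{t∈h} t. -/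
open scoped Classical

/-- The partial order on walls/reflections: `t ≤ t'` iff the half-space of `t`
containing `1` is contained in the half-space of `t'` containing `1`. -/
def wallLE {B W : Type*} [Group W] {M : CoxeterMatrix B} (cs : CoxeterSystem M W)
    (t t' : W) : Prop :=
  ∀ v : W, cs.length v < cs.length (t * v) → cs.length v < cs.length (t' * v)

/-- The associated strict order: `t < t'` iff `t ≤ t'` and `t ≠ t'`. -/
def wallLT {B W : Type*} [Group W] {M : CoxeterMatrix B} (cs : CoxeterSystem M W)
    (t t' : W) : Prop :=
  wallLE cs t t' ∧ t ≠ t'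

/-- `IsAntichainIn cs u w h`: `h` is an antichain of `P(1|u,w)`, i.e. a finite subset
of `P(1|u,w)` whose elements pairwise commute and are pairwise incomparable
with respect to the strict wall order. -/
def IsAntichainIn {B W : Type*} [Group W] {M : CoxeterMatrix B} (cs : CoxeterSystem M W)
    (u w : W) (h : Finset W) : Prop :=
  (↑h : Set W) ⊆ sepSet cs u w ∧
  (∀ t ∈ h, ∀ t' ∈ h, t * t' = t' * t) ∧
  (∀ t ∈ h, ∀ t' ∈ h, t ≠ t' → ¬ wallLT cs t t')

/-- The product `∏_{t ∈ h} t` of a finite set of pairwise commuting group elements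
(in any order; junk value `1` if the elements do not commute). -/
noncomputable def acProd {W : Type*} [Group W] (h : Finset W) : W :=
  if hc : ∀ a ∈ h, ∀ b ∈ h, a ≠ b → a * b = b * a then
    h.noncommProd id (fun a ha b hb hab =>
      commute_iff_eq (id a) (id b) |>.mpr (hc a ha b hb hab))
  else 1

/-- The height `ht(h)` of an antichain `h` of `P(1|u,w)`: the number of elements
`t' ∈ P(1|u,w)` such that no `t ∈ h` satisfies `t < t'`. -/
noncomputable def acHeight {B W : Type*} [Group W] {M : CoxeterMatrix B}
    (cs : CoxeterSystem M W) (u w : W) (h : Finset W) : ℕ :=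
  Set.ncard {t' | t' ∈ sepSet cs u w ∧ ∀ t ∈ h, ¬ wallLT cs t t'}

namespace RAproof

open CoxeterSystem List

variable {B W : Type*} [Group W] {M : CoxeterMatrix B} (cs : CoxeterSystem M W)

theorem sconj_sconj (i : B) (x : W) :
    cs.simple i * (cs.simple i * x * cs.simple i) * cs.simple i = x := by
  rw [show cs.simple i * (cs.simple i * x * cs.simple i) * cs.simple i
      = cs.simple i * cs.simple i * x * (cs.simple i * cs.simple i) by group,
    cs.simple_mul_simple_self, one_mul, mul_one]

theorem sconj_eq_iff (i : B) (x y : W) :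
    cs.simple i * x * cs.simple i = y ↔ x = cs.simple i * y * cs.simple i := by
  constructor
  · rintro rfl; rw [sconj_sconj]
  · rintro rfl; rw [sconj_sconj]

theorem sconj_eq_simple_iff (i : B) (x : W) :
    cs.simple i * x * cs.simple i = cs.simple i ↔ x = cs.simple i := by
  rw [sconj_eq_iff]
  rw [cs.simple_mul_simple_self, one_mul]

theorem simple_ne_simple (hra : M.IsRightAngled) {i j : B} (hij : i ≠ j) :
    cs.simple i ≠ cs.simple j := by
  have hlift : M.IsLiftable (fun b => if b = i then (-1 : ℤˣ) else 1) := by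
    intro a b
    rcases eq_or_ne a b with rfl | hab
    · rw [M.diagonal a, pow_one]
      by_cases h : a = i <;> simp [h]
    · rcases hra a b hab with h2 | h0
      · rw [h2]
        have hsq : ∀ c : B, ((if c = i then (-1 : ℤˣ) else 1)
            * (if c = i then (-1 : ℤˣ) else 1)) = 1 := by
          intro c; by_cases h : c = i <;> simp [h]
        have : ((if a = i then (-1 : ℤˣ) else 1) * if b = i then (-1:ℤˣ) else 1) ^ 2
            = ((if a = i then (-1 : ℤˣ) else 1) * (if a = i then (-1 : ℤˣ) else 1))
            * ((if b = i then (-1 : ℤˣ) else 1) * (if b = i then (-1 : ℤˣ) else 1)) := by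
          rw [pow_two, mul_mul_mul_comm]
        rw [this, hsq, hsq, one_mul]
      · rw [h0, pow_zero]
  have h1 : (cs.lift ⟨_, hlift⟩) (cs.simple i) = (-1 : ℤˣ) := by
    rw [cs.lift_apply_simple hlift i]; simp
  have h2 : (cs.lift ⟨_, hlift⟩) (cs.simple j) = (1 : ℤˣ) := by
    rw [cs.lift_apply_simple hlift j]; simp [hij.symm]
  intro h
  rw [h, h2] at h1
  exact absurd h1 (by decide)

theorem raInvol (i : B) : Function.Involutive
    (fun p : W × ℤˣ => (cs.simple i * p.1 * cs.simple i,
      (if p.1 = cs.simple i then -1 else 1) * p.2)) := by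
  intro p
  refine Prod.ext (sconj_sconj cs i p.1) ?_
  show (if (cs.simple i * p.1 * cs.simple i) = cs.simple i then (-1:ℤˣ) else 1) *
      ((if p.1 = cs.simple i then (-1:ℤˣ) else 1) * p.2) = p.2
  simp only [sconj_eq_simple_iff]
  rcases em (p.1 = cs.simple i) with h | h <;> simp [h]

/-- The basic involution of `W × ℤˣ` attached to a generator. -/
noncomputable def raToPerm (i : B) : Equiv.Perm (W × ℤˣ) :=
  Function.Involutive.toPerm _ (raInvol cs i)

theorem raToPerm_apply (i : B) (p : W × ℤˣ) :
    raToPerm cs i p = (cs.simple i * p.1 * cs.simple i,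
      (if p.1 = cs.simple i then -1 else 1) * p.2) := rfl

theorem raToPerm_sq (a : B) : raToPerm cs a * raToPerm cs a = 1 := by
  apply Equiv.ext
  intro p
  exact raInvol cs a p

theorem raToPerm_liftable (hra : M.IsRightAngled) :
    M.IsLiftable (raToPerm cs) := by
  intro a b
  rcases eq_or_ne a b with rfl | hab
  · rw [M.diagonal a, pow_one, raToPerm_sq]
  · rcases hra a b hab with h2 | h0
    · rw [h2]
      have k1 : (cs.simple a * cs.simple b) ^ 2 = 1 := by
        have := cs.simple_mul_simple_pow a b; rwa [h2] at this
      have hc : cs.simple a * cs.simple b = cs.simple b * cs.simple a := by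
        calc cs.simple a * cs.simple b
            = (cs.simple a * cs.simple b)⁻¹ := by
              rw [inv_eq_of_mul_eq_one_right (by rw [← pow_two, k1])]
          _ = cs.simple b * cs.simple a := by
              rw [mul_inv_rev, cs.inv_simple, cs.inv_simple]
      have hbab : cs.simple b * cs.simple a * cs.simple b = cs.simple a := by
        rw [← hc, mul_assoc, cs.simple_mul_simple_self, mul_one]
      have haba : cs.simple a * cs.simple b * cs.simple a = cs.simple b := by
        rw [hc, mul_assoc, cs.simple_mul_simple_self, mul_one]
      apply Equiv.ext
      intro p
      obtain ⟨t, e⟩ := p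
      show ((raToPerm cs a * raToPerm cs b) ((raToPerm cs a * raToPerm cs b) (t, e))) = (t, e)
      simp only [Equiv.Perm.mul_apply, raToPerm_apply]
      have c3iff : cs.simple a * (cs.simple b * t * cs.simple b) * cs.simple a = cs.simple b
          ↔ t = cs.simple b := by
        rw [sconj_eq_iff, haba, sconj_eq_simple_iff]
      have c4iff : cs.simple b *
            (cs.simple a * (cs.simple b * t * cs.simple b) * cs.simple a) * cs.simple b
            = cs.simple a
          ↔ cs.simple b * t * cs.simple b = cs.simple a := by
        rw [sconj_eq_iff (i := b), hbab, sconj_eq_simple_iff]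
      refine Prod.ext ?_ ?_
      · show cs.simple a * (cs.simple b *
          (cs.simple a * (cs.simple b * t * cs.simple b) * cs.simple a) * cs.simple b)
            * cs.simple a = t
        calc cs.simple a * (cs.simple b *
            (cs.simple a * (cs.simple b * t * cs.simple b) * cs.simple a) * cs.simple b)
            * cs.simple a
            = (cs.simple a * cs.simple b * cs.simple a * cs.simple b) * t *
              (cs.simple b * cs.simple a * cs.simple b * cs.simple a) := by group
          _ = t := by
              rw [show cs.simple a * cs.simple b * cs.simple a * cs.simple b
                  = (cs.simple a * cs.simple b)^2 by rw [pow_two]; group, k1]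
              rw [show cs.simple b * cs.simple a * cs.simple b * cs.simple a
                  = (cs.simple b * cs.simple a)^2 by rw [pow_two]; group]
              rw [show (cs.simple b * cs.simple a)^2 = 1 by
                have := cs.simple_mul_simple_pow' a b; rwa [h2] at this]
              rw [one_mul, mul_one]
      · show (if cs.simple b *
            (cs.simple a * (cs.simple b * t * cs.simple b) * cs.simple a) * cs.simple b
            = cs.simple a then (-1:ℤˣ) else 1) *
          ((if cs.simple a * (cs.simple b * t * cs.simple b) * cs.simple a = cs.simple b
            then (-1:ℤˣ) else 1) *
          ((if cs.simple b * t * cs.simple b = cs.simple a then (-1:ℤˣ) else 1) *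
          ((if t = cs.simple b then (-1:ℤˣ) else 1) * e))) = e
        simp only [c3iff, c4iff]
        rcases em (t = cs.simple b) with h1 | h1 <;>
          rcases em (cs.simple b * t * cs.simple b = cs.simple a) with h2' | h2'
        · rw [if_pos h1, if_pos h2']; simp
        · rw [if_pos h1, if_neg h2']; simp
        · rw [if_neg h1, if_pos h2']; simp
        · rw [if_neg h1, if_neg h2']; simp
    · rw [h0, pow_zero]

/-- The sign/reflection representation of a right-angled Coxeter system. -/
noncomputable def raRep (hra : M.IsRightAngled) : W →* Equiv.Perm (W × ℤˣ) :=
  cs.lift ⟨raToPerm cs, raToPerm_liftable cs hra⟩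

theorem raRep_simple (hra : M.IsRightAngled) (i : B) :
    raRep cs hra (cs.simple i) = raToPerm cs i :=
  cs.lift_apply_simple (raToPerm_liftable cs hra) i

theorem raRep_wordProd (hra : M.IsRightAngled) (ω : List B) (t : W) (e : ℤˣ) :
    raRep cs hra (cs.wordProd ω) (t, e) =
      (cs.wordProd ω * t * (cs.wordProd ω)⁻¹,
        (-1 : ℤˣ) ^ ((cs.rightInvSeq ω).count t) * e) := by
  induction ω generalizing t e with
  | nil => simp [cs.wordProd_nil]
  | cons i ω ih =>
    rw [cs.wordProd_cons, map_mul, Equiv.Perm.mul_apply, ih, raRep_simple, raToPerm_apply]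
    dsimp only
    refine Prod.ext ?_ ?_
    · show cs.simple i * (cs.wordProd ω * t * (cs.wordProd ω)⁻¹) * cs.simple i
        = cs.simple i * cs.wordProd ω * t * (cs.simple i * cs.wordProd ω)⁻¹
      rw [mul_inv_rev, cs.inv_simple]
      group
    · show (if cs.wordProd ω * t * (cs.wordProd ω)⁻¹ = cs.simple i then (-1:ℤˣ) else 1) *
          ((-1:ℤˣ) ^ ((cs.rightInvSeq ω).count t) * e)
        = (-1 : ℤˣ) ^ ((cs.rightInvSeq (i :: ω)).count t) * e
      have hcond : (cs.wordProd ω * t * (cs.wordProd ω)⁻¹ = cs.simple i)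
          ↔ (t = (cs.wordProd ω)⁻¹ * cs.simple i * cs.wordProd ω) := by
        constructor
        · intro h; rw [← h]; group
        · rintro rfl; group
      have hris : cs.rightInvSeq (i :: ω)
          = ((cs.wordProd ω)⁻¹ * cs.simple i * cs.wordProd ω) :: cs.rightInvSeq ω := rfl
      rw [hris, List.count_cons]
      simp only [beq_iff_eq, hcond]
      rcases em (t = (cs.wordProd ω)⁻¹ * cs.simple i * cs.wordProd ω) with h | h
      · rw [if_pos h, if_pos h.symm, pow_succ]
        rw [mul_assoc, ← mul_assoc]
        rw [mul_comm (-1 : ℤˣ) ((-1 : ℤˣ) ^ count t (cs.rightInvSeq ω))]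
        rw [mul_assoc]
      · rw [if_neg h, if_neg (fun hh => h hh.symm), one_mul, Nat.add_zero]

end RAproof

namespace RAproof

variable {B W : Type*} [Group W] {M : CoxeterMatrix B} (cs : CoxeterSystem M W)

theorem sconj_inj (i : B) (x y : W) :
    cs.simple i * x * cs.simple i = cs.simple i * y * cs.simple i ↔ x = y := by
  rw [sconj_eq_iff, sconj_sconj]

theorem raRep_pair (hra : M.IsRightAngled) (w t : W) (e : ℤˣ) :
    raRep cs hra w (t, e) = (w * t * w⁻¹, (raRep cs hra w (t, 1)).2 * e) := by
  obtain ⟨ω, rfl⟩ := cs.wordProd_surjective w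
  rw [raRep_wordProd, raRep_wordProd]
  refine Prod.ext rfl ?_
  show (-1:ℤˣ) ^ _ * e = ((cs.wordProd ω * t * (cs.wordProd ω)⁻¹,
      (-1:ℤˣ) ^ (List.count t (cs.rightInvSeq ω)) * 1).2) * e
  rw [mul_one]

theorem raRep_refl_self (hra : M.IsRightAngled) {t : W} (ht : cs.IsReflection t) (e : ℤˣ) :
    raRep cs hra t (t, e) = (t, -e) := by
  obtain ⟨v, k, rfl⟩ := ht
  set T := v * cs.simple k * v⁻¹ with hT
  have hvTv : v⁻¹ * T * v = cs.simple k := by rw [hT]; group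
  have h1 : raRep cs hra v⁻¹ (T, e) = (cs.simple k, (raRep cs hra v⁻¹ (T, 1)).2 * e) := by
    rw [raRep_pair cs hra v⁻¹ T e]
    refine Prod.ext ?_ rfl
    show v⁻¹ * T * v⁻¹⁻¹ = cs.simple k
    rw [inv_inv, hvTv]
  set c1 := (raRep cs hra v⁻¹ (T, 1)).2 with hc1
  have h2 : raRep cs hra (cs.simple k) (cs.simple k, c1 * e)
      = (cs.simple k, -(c1 * e)) := by
    rw [raRep_simple, raToPerm_apply]
    refine Prod.ext ?_ ?_
    · show cs.simple k * cs.simple k * cs.simple k = cs.simple k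
      rw [cs.simple_mul_simple_self, one_mul]
    · show (if cs.simple k = cs.simple k then (-1:ℤˣ) else 1) * (c1 * e) = -(c1 * e)
      rw [if_pos rfl, neg_one_mul]
  set c2 := (raRep cs hra v (cs.simple k, 1)).2 with hc2
  have h3 : ∀ x : ℤˣ, raRep cs hra v (cs.simple k, x) = (T, c2 * x) := by
    intro x
    rw [raRep_pair cs hra v (cs.simple k) x]
  have hcc : c2 * (c1 * e) = e := by
    have : raRep cs hra v (raRep cs hra v⁻¹ (T, e)) = (T, e) := by
      rw [← Equiv.Perm.mul_apply, ← map_mul, mul_inv_cancel, map_one, Equiv.Perm.one_apply]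
    rw [h1, h3] at this
    exact (Prod.ext_iff.mp this).2
  have : raRep cs hra T (T, e)
      = raRep cs hra v (raRep cs hra (cs.simple k) (raRep cs hra v⁻¹ (T, e))) := by
    rw [← Equiv.Perm.mul_apply, ← Equiv.Perm.mul_apply, ← map_mul, ← map_mul, hT]
  rw [this, h1, h2, h3]
  refine Prod.ext rfl ?_
  show c2 * -(c1 * e) = -e
  rw [mul_neg, hcc]

theorem mem_rightInvSeq_of_isRightInversion (hra : M.IsRightAngled) {ω : List B} {t : W}
    (h : cs.IsRightInversion (cs.wordProd ω) t) : t ∈ cs.rightInvSeq ω := by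
  by_contra hmem
  obtain ⟨τ, hτ, hwt⟩ := cs.exists_reduced_word' (cs.wordProd ω * t)
  have e1 : raRep cs hra (cs.wordProd ω * t) (t, 1)
      = (cs.wordProd ω * t * (cs.wordProd ω)⁻¹, -1) := by
    rw [map_mul, Equiv.Perm.mul_apply, raRep_refl_self cs hra h.1, raRep_wordProd]
    rw [List.count_eq_zero.mpr hmem, pow_zero, one_mul]
  have e2 : raRep cs hra (cs.wordProd ω * t) (t, 1)
      = ((cs.wordProd ω * t) * t * (cs.wordProd ω * t)⁻¹,
        (-1:ℤˣ) ^ (List.count t (cs.rightInvSeq τ)) * 1) := by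
    rw [hwt, raRep_wordProd]
  have hsign : (-1 : ℤˣ) = (-1:ℤˣ) ^ (List.count t (cs.rightInvSeq τ)) * 1 := by
    have := e1.symm.trans e2
    exact (Prod.ext_iff.mp this).2
  have hmemτ : t ∈ cs.rightInvSeq τ := by
    by_contra hm2
    rw [List.count_eq_zero.mpr hm2, pow_zero, one_mul] at hsign
    exact absurd hsign (by decide)
  have hinv := cs.isRightInversion_of_mem_rightInvSeq hτ hmemτ
  rw [← hwt] at hinv
  have h2 := hinv.2
  rw [mul_assoc, h.1.mul_self, mul_one] at h2
  exact absurd h.2 (by omega)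

theorem mem_leftInvSeq_of_isLeftInversion (hra : M.IsRightAngled) {ω : List B} {t : W}
    (h : cs.IsLeftInversion (cs.wordProd ω) t) : t ∈ cs.leftInvSeq ω := by
  have h' : cs.IsRightInversion (cs.wordProd ω)⁻¹ t := cs.isRightInversion_inv_iff.mpr h
  rw [← cs.wordProd_reverse] at h'
  have := mem_rightInvSeq_of_isRightInversion cs hra h'
  rw [cs.rightInvSeq_reverse] at this
  exact (List.mem_reverse).mp this

theorem isLeftInversion_iff_mem (hra : M.IsRightAngled) {ω : List B} (hω : cs.IsReduced ω)
    {t : W} : cs.IsLeftInversion (cs.wordProd ω) t ↔ t ∈ cs.leftInvSeq ω :=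
  ⟨mem_leftInvSeq_of_isLeftInversion cs hra, cs.isLeftInversion_of_mem_leftInvSeq hω⟩

theorem finite_leftInvSet (hra : M.IsRightAngled) (u : W) :
    {t : W | cs.IsLeftInversion u t}.Finite := by
  obtain ⟨ω, hω, rfl⟩ := cs.exists_reduced_word' u
  exact Set.Finite.subset (List.finite_toSet (cs.leftInvSeq ω))
    (fun t ht => mem_leftInvSeq_of_isLeftInversion cs hra ht)

/-- The fundamental transfer lemma: conjugation by a simple reflection carries
left inversions of `v` to left inversions of `s i * v`. -/
theorem isLeftInversion_smul_iff (hra : M.IsRightAngled) {i : B} {x : W}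
    (hx : cs.IsReflection x) (hxi : x ≠ cs.simple i) (v : W) :
    cs.IsLeftInversion v x ↔
      cs.IsLeftInversion (cs.simple i * v) (cs.simple i * x * cs.simple i) := by
  suffices H : ∀ v : W, cs.length v < cs.length (cs.simple i * v) →
      ∀ x : W, cs.IsReflection x → x ≠ cs.simple i →
      (cs.IsLeftInversion v x ↔
        cs.IsLeftInversion (cs.simple i * v) (cs.simple i * x * cs.simple i)) by
    rcases lt_or_gt_of_ne (cs.length_simple_mul_ne v i) with hlt | hgt
    · -- ℓ (s i * v) < ℓ v
      have hgrow : cs.length (cs.simple i * v) <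
          cs.length (cs.simple i * (cs.simple i * v)) := by
        rwa [cs.simple_mul_simple_cancel_left]
      have hx' : cs.IsReflection (cs.simple i * x * cs.simple i) := by
        have := hx.conj (cs.simple i)
        rwa [cs.inv_simple] at this
      have hxi' : cs.simple i * x * cs.simple i ≠ cs.simple i := by
        rw [Ne, sconj_eq_simple_iff]; exact hxi
      have := H (cs.simple i * v) hgrow (cs.simple i * x * cs.simple i) hx' hxi'
      rw [cs.simple_mul_simple_cancel_left, sconj_sconj] at this
      exact this.symm
    · exact H v hgt x hx hxi
  intro v hv x hx hxi
  obtain ⟨ω, hω, rfl⟩ := cs.exists_reduced_word' v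
  have hlen : cs.length (cs.simple i * cs.wordProd ω) = cs.length (cs.wordProd ω) + 1 := by
    rcases cs.length_simple_mul (cs.wordProd ω) i with h | h
    · exact h
    · omega
  have hred : cs.IsReduced (i :: ω) := by
    show cs.length (cs.wordProd (i :: ω)) = (i :: ω).length
    rw [cs.wordProd_cons, hlen, hω]
    rfl
  have hlis : cs.leftInvSeq (i :: ω)
      = cs.simple i :: List.map (MulAut.conj (cs.simple i)) (cs.leftInvSeq ω) := rfl
  constructor
  · intro hxv
    have hmem : x ∈ cs.leftInvSeq ω := mem_leftInvSeq_of_isLeftInversion cs hra hxv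
    have hmem' : cs.simple i * x * cs.simple i ∈ cs.leftInvSeq (i :: ω) := by
      rw [hlis]
      refine List.mem_cons_of_mem _ (List.mem_map.mpr ⟨x, hmem, ?_⟩)
      show cs.simple i * x * (cs.simple i)⁻¹ = _
      rw [cs.inv_simple]
    have := cs.isLeftInversion_of_mem_leftInvSeq hred hmem'
    rwa [cs.wordProd_cons] at this
  · intro hxsv
    have hmem' : cs.simple i * x * cs.simple i ∈ cs.leftInvSeq (i :: ω) := by
      have := mem_leftInvSeq_of_isLeftInversion cs hra (t := cs.simple i * x * cs.simple i)
        (ω := i :: ω) (by rwa [cs.wordProd_cons])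
      exact this
    rw [hlis] at hmem'
    rcases List.mem_cons.mp hmem' with heq | hmap
    · exact absurd ((sconj_eq_simple_iff cs i x).mp heq) hxi
    · obtain ⟨y, hy, heq⟩ := List.mem_map.mp hmap
      have : cs.simple i * y * cs.simple i = cs.simple i * x * cs.simple i := by
        show _ = _
        rw [← heq]
        show cs.simple i * y * cs.simple i = cs.simple i * y * (cs.simple i)⁻¹
        rw [cs.inv_simple]
      rw [sconj_inj] at this
      rw [this] at hy
      exact cs.isLeftInversion_of_mem_leftInvSeq hω hy

end RAproof

namespace RAproof

open List

variable {B W : Type*} [Group W] {M : CoxeterMatrix B} (cs : CoxeterSystem M W)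

/-- Alternating word of length `n` starting with `i` (then `j`, `i`, ...). -/
def myw (i j : B) : ℕ → List B
  | 0 => []
  | n+1 => i :: myw j i n

@[simp] theorem myw_zero (i j : B) : myw i j 0 = [] := rfl

theorem myw_succ (i j : B) (n : ℕ) : myw i j (n+1) = i :: myw j i n := rfl

theorem myw_length (n : ℕ) : ∀ i j : B, (myw i j n).length = n := by
  induction n with
  | zero => intro i j; rfl
  | succ n ih => intro i j; simp [myw_succ, ih j i]

theorem myw_take (n : ℕ) : ∀ (i j : B) (k : ℕ), k ≤ n → (myw i j n).take k = myw i j k := by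
  induction n with
  | zero => intro i j k hk; interval_cases k; rfl
  | succ n ih =>
    intro i j k hk
    match k with
    | 0 => rfl
    | k+1 =>
      rw [myw_succ, List.take_succ_cons, ih j i k (by omega), ← myw_succ]

theorem myw_get (n : ℕ) : ∀ (i j : B) (k : ℕ), k < n →
    (myw i j n)[k]? = some (if k % 2 = 0 then i else j) := by
  induction n with
  | zero => omega
  | succ n ih =>
    intro i j k hk
    match k with
    | 0 => rfl
    | k+1 =>
      rw [myw_succ]
      show (myw j i n)[k]? = _
      rw [ih j i k (by omega)]
      rcases Nat.mod_two_eq_zero_or_one k with h | h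
      · have h2 : (k+1) % 2 = 1 := by omega
        rw [h, h2]; simp
      · have h2 : (k+1) % 2 = 0 := by omega
        rw [h, h2]; simp

/-! ### 2×2 integer matrices for the infinite dihedral group -/

/-- `I + 2kN` where `N = !![1,-1;1,-1]`. -/
def Aij (k : ℕ) : Matrix (Fin 2) (Fin 2) ℤ := !![1+2*k, -(2*k); 2*k, 1-2*k]
/-- `I - 2kN`. -/
def Aji (k : ℕ) : Matrix (Fin 2) (Fin 2) ℤ := !![1-2*k, 2*k; -(2*k), 1+2*k]
/-- `X - 2kN` where `X = !![-1,2;0,1]`. -/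
def Bij (k : ℕ) : Matrix (Fin 2) (Fin 2) ℤ := !![-1-2*k, 2+2*k; -(2*k), 1+2*k]
/-- `Y + 2kN` where `Y = !![1,0;2,-1]`. -/
def Bji (k : ℕ) : Matrix (Fin 2) (Fin 2) ℤ := !![1+2*k, -(2*k); 2+2*k, -1-2*k]

theorem m_one : Aij 0 = 1 := by rw [Matrix.one_fin_two]; norm_num [Aij]
theorem m_one' : Aji 0 = 1 := by rw [Matrix.one_fin_two]; norm_num [Aji]
theorem mXsq : Bij 0 * Bij 0 = 1 := by
  rw [Matrix.one_fin_two]; norm_num [Bij, Matrix.mul_fin_two]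
theorem mYsq : Bji 0 * Bji 0 = 1 := by
  rw [Matrix.one_fin_two]; norm_num [Bji, Matrix.mul_fin_two]
theorem m1 (k : ℕ) : Bij 0 * Aji k = Bij k := by
  simp only [Bij, Aji, Matrix.mul_fin_two]; congr 1 <;> push_cast <;> ring
theorem m2 (k : ℕ) : Bji 0 * Aij k = Bji k := by
  simp only [Bji, Aij, Matrix.mul_fin_two]; congr 1 <;> push_cast <;> ring
theorem m3 (k : ℕ) : Bij 0 * Bji k = Aij (k+1) := by
  simp only [Bij, Bji, Aij, Matrix.mul_fin_two]; congr 1 <;> push_cast <;> ring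
theorem m4 (k : ℕ) : Bji 0 * Bij k = Aji (k+1) := by
  simp only [Bji, Bij, Aji, Matrix.mul_fin_two]; congr 1 <;> push_cast <;> ring
theorem m5 (k : ℕ) : Aij k * Bij 0 = Bij k := by
  simp only [Aij, Bij, Matrix.mul_fin_two]; congr 1 <;> push_cast <;> ring
theorem m6 (k : ℕ) : Bij k * Bji 0 = Aij (k+1) := by
  simp only [Bij, Bji, Aij, Matrix.mul_fin_two]; congr 1 <;> push_cast <;> ring
theorem d1 (k : ℕ) : Bji k ≠ Bij k := by
  intro h
  have := congrArg (fun m => m 1 0) h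
  simp only [Bji, Bij] at this
  simp at this
  omega
theorem d2 (k : ℕ) : Aji (k+1) ≠ Aij (k+1) := by
  intro h
  have := congrArg (fun m => m 0 1) h
  simp only [Aji, Aij] at this
  simp at this
  omega

/-- Generator images for the dihedral matrix representation. -/
noncomputable def fmat (i j : B) : B → Matrix (Fin 2) (Fin 2) ℤ := fun b =>
  if b = i then Bij 0 else if b = j then Bji 0 else 1

theorem fmat_liftable (hra : M.IsRightAngled) {i j : B} (hij0 : M i j = 0) :
    M.IsLiftable (fmat i j) := by
  have hij : i ≠ j := by
    intro h; rw [h, M.diagonal j] at hij0; omega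
  have hsq : ∀ a : B, fmat i j a * fmat i j a = 1 := by
    intro a
    unfold fmat
    by_cases ha : a = i
    · simp [ha, hij, mXsq]
    · by_cases ha' : a = j
      · simp [ha, ha', Ne.symm hij, mYsq]
      · simp [ha, ha']
  intro a b
  rcases eq_or_ne a b with rfl | hab
  · rw [M.diagonal a, pow_one, hsq]
  · rcases hra a b hab with h2 | h0
    · -- M a b = 2; can't have {a,b} = {i,j}
      have hne : ¬(a = i ∧ b = j) := by
        rintro ⟨h1', h2'⟩
        subst h1'; subst h2'
        rw [h2] at hij0; omega
      have hne' : ¬(a = j ∧ b = i) := by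
        rintro ⟨h1', h2'⟩
        subst h1'; subst h2'
        rw [M.symmetric] at h2
        rw [h2] at hij0; omega
      have hcomm : fmat i j a * fmat i j b = fmat i j b * fmat i j a := by
        unfold fmat
        by_cases ha : a = i <;> by_cases hb : b = i <;>
          by_cases ha' : a = j <;> by_cases hb' : b = j <;>
          simp_all
      rw [h2, pow_two]
      calc fmat i j a * fmat i j b * (fmat i j a * fmat i j b)
          = fmat i j a * fmat i j a * (fmat i j b * fmat i j b) := by
            rw [mul_assoc, ← mul_assoc (fmat i j b), ← hcomm, mul_assoc, ← mul_assoc]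
        _ = 1 := by rw [hsq, hsq, one_mul]
    · rw [h0, pow_zero]

/-- The dihedral matrix representation attached to a pair `i j` with `M i j = 0`. -/
noncomputable def fh (hra : M.IsRightAngled) {i j : B} (hij0 : M i j = 0) :
    W →* Matrix (Fin 2) (Fin 2) ℤ :=
  cs.lift ⟨fmat i j, fmat_liftable hra hij0⟩

theorem fh_si (hra : M.IsRightAngled) {i j : B} (hij0 : M i j = 0) :
    fh cs hra hij0 (cs.simple i) = Bij 0 := by
  rw [fh, cs.lift_apply_simple]; simp [fmat]

theorem fh_sj (hra : M.IsRightAngled) {i j : B} (hij0 : M i j = 0) :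
    fh cs hra hij0 (cs.simple j) = Bji 0 := by
  have hij : i ≠ j := by
    intro h; rw [h, M.diagonal j] at hij0; omega
  rw [fh, cs.lift_apply_simple]; simp [fmat, hij.symm]

theorem fh_myw (hra : M.IsRightAngled) {i j : B} (hij0 : M i j = 0) : ∀ k : ℕ,
    fh cs hra hij0 (cs.wordProd (myw i j (2*k))) = Aij k ∧
    fh cs hra hij0 (cs.wordProd (myw j i (2*k))) = Aji k ∧
    fh cs hra hij0 (cs.wordProd (myw i j (2*k+1))) = Bij k ∧
    fh cs hra hij0 (cs.wordProd (myw j i (2*k+1))) = Bji k := by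
  have hstep : ∀ n : ℕ, cs.wordProd (myw i j (n+1)) = cs.simple i * cs.wordProd (myw j i n) :=
    fun n => cs.wordProd_cons i (myw j i n)
  have hstep' : ∀ n : ℕ, cs.wordProd (myw j i (n+1)) = cs.simple j * cs.wordProd (myw i j n) :=
    fun n => cs.wordProd_cons j (myw i j n)
  intro k
  induction k with
  | zero =>
    refine ⟨by simp [m_one.symm], by simp [m_one'.symm], ?_, ?_⟩
    · show fh cs hra hij0 (cs.wordProd (myw i j 1)) = Bij 0
      have : myw i j 1 = [i] := rfl
      rw [this, cs.wordProd_singleton, fh_si]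
    · show fh cs hra hij0 (cs.wordProd (myw j i 1)) = Bji 0
      have : myw j i 1 = [j] := rfl
      rw [this, cs.wordProd_singleton, fh_sj]
  | succ k ih =>
    obtain ⟨ih1, ih2, ih3, ih4⟩ := ih
    have e1 : fh cs hra hij0 (cs.wordProd (myw i j (2*(k+1)))) = Aij (k+1) := by
      have : 2*(k+1) = (2*k+1)+1 := by ring
      rw [this, hstep, map_mul, fh_si, ih4, m3]
    have e2 : fh cs hra hij0 (cs.wordProd (myw j i (2*(k+1)))) = Aji (k+1) := by
      have : 2*(k+1) = (2*k+1)+1 := by ring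
      rw [this, hstep', map_mul, fh_sj, ih3, m4]
    refine ⟨e1, e2, ?_, ?_⟩
    · rw [hstep, map_mul, fh_si, e2, m1]
    · rw [hstep', map_mul, fh_sj, e1, m2]

end RAproof

namespace RAproof

open List

variable {B W : Type*} [Group W] {M : CoxeterMatrix B} (cs : CoxeterSystem M W)

theorem lemD_step (hra : M.IsRightAngled) {i j : B} (hij0 : M i j = 0) {u : W}
    (hj : cs.IsLeftInversion u (cs.simple j))
    (n : ℕ) (hP : ∃ z, u = cs.wordProd (myw i j n) * z ∧ cs.length u = n + cs.length z) :
    ∃ z, u = cs.wordProd (myw j i (n+1)) * z ∧ cs.length u = (n+1) + cs.length z := by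
  obtain ⟨z, huz, hlen⟩ := hP
  obtain ⟨ζ, hζred, hζ⟩ := cs.exists_reduced_word' z
  set Ω := myw i j n ++ ζ with hΩ
  have hπΩ : cs.wordProd Ω = u := by rw [hΩ, cs.wordProd_append, ← hζ, ← huz]
  have hΩlen : Ω.length = n + ζ.length := by simp [hΩ, myw_length]
  have hzlen : cs.length z = ζ.length := by rw [hζ]; exact hζred
  have hmem : cs.simple j ∈ cs.leftInvSeq Ω :=
    mem_leftInvSeq_of_isLeftInversion cs hra (by rw [hπΩ]; exact hj)
  obtain ⟨kk, hkk, hEq⟩ := List.mem_iff_getElem.mp hmem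
  rw [cs.length_leftInvSeq] at hkk
  have hgetD : (cs.leftInvSeq Ω).getD kk 1 = cs.simple j := by
    rw [List.getD_eq_getElem _ 1 (by rw [cs.length_leftInvSeq]; exact hkk), hEq]
  rcases lt_or_ge kk n with hlt | hge
  · -- `s j` would be a wall of the alternating prefix: matrix contradiction
    exfalso
    have htake : Ω.take kk = myw i j kk := by
      rw [hΩ, List.take_append, myw_take n i j kk (le_of_lt hlt),
        myw_length, Nat.sub_eq_zero_of_le (le_of_lt hlt), List.take_zero, List.append_nil]
    have hget : (Ω)[kk]? = some (if kk % 2 = 0 then i else j) := by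
      rw [hΩ, List.getElem?_append_left (by rw [myw_length]; exact hlt), myw_get n i j kk hlt]
    have heq2 := cs.getD_leftInvSeq Ω kk
    rw [hgetD, hget, htake] at heq2
    simp only [Option.map_some, Option.getD_some] at heq2
    have hmul : cs.simple j * cs.wordProd (myw i j kk)
        = cs.wordProd (myw i j kk) * cs.simple (if kk % 2 = 0 then i else j) := by
      rw [heq2]; group
    have hfh := congrArg (fh cs hra hij0) hmul
    rw [map_mul, map_mul, fh_sj] at hfh
    obtain ⟨k', hk' | hk'⟩ := Nat.even_or_odd' kk
    · subst hk'
      rw [if_pos (by omega)] at hfh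
      rw [(fh_myw cs hra hij0 k').1, fh_si, m2, m5] at hfh
      exact d1 k' hfh
    · subst hk'
      rw [if_neg (by omega)] at hfh
      rw [show 2*k'+1 = 2*k'+1 from rfl, (fh_myw cs hra hij0 k').2.2.1, fh_sj, m4, m6] at hfh
      exact d2 k' hfh
  · -- the exchange happens inside `z`: extend the alternating prefix
    have hprod := cs.getD_leftInvSeq_mul_wordProd Ω kk
    rw [hgetD, hπΩ] at hprod
    rw [List.eraseIdx_eq_take_drop_succ Ω kk, cs.wordProd_append] at hprod
    have htake : Ω.take kk = myw i j n ++ ζ.take (kk - n) := by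
      rw [hΩ, List.take_append, myw_length,
        List.take_of_length_le (by rw [myw_length]; exact hge)]
    rw [htake, cs.wordProd_append] at hprod
    set z' := cs.wordProd (ζ.take (kk - n)) * cs.wordProd (Ω.drop (kk+1)) with hz'
    have hu : u = cs.wordProd (myw j i (n+1)) * z' := by
      have : u = cs.simple j * (cs.simple j * u) := by
        rw [cs.simple_mul_simple_cancel_left]
      rw [this, hprod, myw_succ, cs.wordProd_cons, hz']
      group
    have hb1 : cs.length z' ≤ (kk - n) + (Ω.length - (kk+1)) := by
      calc cs.length z' ≤ cs.length (cs.wordProd (ζ.take (kk - n)))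
            + cs.length (cs.wordProd (Ω.drop (kk+1))) := cs.length_mul_le _ _
        _ ≤ (ζ.take (kk - n)).length + (Ω.drop (kk+1)).length := by
            exact Nat.add_le_add (cs.length_wordProd_le _) (cs.length_wordProd_le _)
        _ ≤ (kk - n) + (Ω.length - (kk+1)) := by
            rw [List.length_take, List.length_drop]
            exact Nat.add_le_add (min_le_left _ _) (le_refl _)
    have hb2 : cs.length u ≤ (n+1) + cs.length z' := by
      calc cs.length u = cs.length (cs.wordProd (myw j i (n+1)) * z') := by rw [← hu]
        _ ≤ cs.length (cs.wordProd (myw j i (n+1))) + cs.length z' := cs.length_mul_le _ _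
        _ ≤ (n+1) + cs.length z' := by
            exact Nat.add_le_add ((cs.length_wordProd_le _).trans (by rw [myw_length])) le_rfl
    exact ⟨z', hu, by omega⟩

/-- **No element has both descents `i`, `j` when `M i j = 0`.** -/
theorem lemD (hra : M.IsRightAngled) {i j : B} (hij0 : M i j = 0) {u : W}
    (hi : cs.IsLeftInversion u (cs.simple i)) (hj : cs.IsLeftInversion u (cs.simple j)) :
    False := by
  have hji0 : M j i = 0 := by rw [M.symmetric]; exact hij0
  have key : ∀ n : ℕ,
      (∃ z, u = cs.wordProd (myw i j n) * z ∧ cs.length u = n + cs.length z) ∧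
      (∃ z, u = cs.wordProd (myw j i n) * z ∧ cs.length u = n + cs.length z) := by
    intro n
    induction n with
    | zero => exact ⟨⟨u, by simp, by simp⟩, ⟨u, by simp, by simp⟩⟩
    | succ n ih =>
      exact ⟨lemD_step cs hra hji0 hi n ih.2, lemD_step cs hra hij0 hj n ih.1⟩
  obtain ⟨⟨z, _, hl⟩, _⟩ := key (cs.length u + 1)
  omega

end RAproof

namespace RAproof

open CoxeterSystem List

variable {B W : Type*} [Group W] {M : CoxeterMatrix B} (cs : CoxeterSystem M W)

theorem simple_comm_of_two {i j : B} (h2 : M i j = 2) :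
    cs.simple i * cs.simple j = cs.simple j * cs.simple i := by
  have k1 : (cs.simple i * cs.simple j) ^ 2 = 1 := by
    have := cs.simple_mul_simple_pow i j; rwa [h2] at this
  calc cs.simple i * cs.simple j
      = (cs.simple i * cs.simple j)⁻¹ := by
        rw [inv_eq_of_mul_eq_one_right (by rw [← pow_two, k1])]
    _ = cs.simple j * cs.simple i := by rw [mul_inv_rev, cs.inv_simple, cs.inv_simple]

theorem lis_cons (i : B) (ω : List B) :
    cs.leftInvSeq (i :: ω) = cs.simple i :: List.map (MulAut.conj (cs.simple i))
      (cs.leftInvSeq ω) := rfl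

theorem head_mem_lis (i : B) (ω : List B) :
    cs.simple i ∈ cs.leftInvSeq (i :: ω) := by
  rw [lis_cons]
  exact List.mem_cons_self

theorem last_mem_lis (ω : List B) (q : B) :
    cs.wordProd ω * cs.simple q * (cs.wordProd ω)⁻¹ ∈ cs.leftInvSeq (ω ++ [q]) := by
  rw [← List.concat_eq_append, cs.leftInvSeq_concat, List.concat_eq_append]
  exact List.mem_append_right _ (List.mem_singleton_self _)

/-- **The nesting lemma.** In a right-angled system, if both the wall of `s i` and the wall
of the reflection `t` separate `1` from `u`, and `s i` and `t` do not commute, then every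
chamber beyond the wall of `t` is beyond the wall of `s i`. -/
theorem core_aux (hra : M.IsRightAngled) : ∀ n : ℕ, ∀ u : W, cs.length u = n →
    ∀ (i : B) (t : W), cs.IsReflection t →
      cs.IsLeftInversion u (cs.simple i) → cs.IsLeftInversion u t →
      cs.simple i * t ≠ t * cs.simple i →
      ∀ v : W, cs.IsLeftInversion v t → cs.IsLeftInversion v (cs.simple i) := by
  intro n
  induction n using Nat.strong_induction_on with
  | _ n IH =>
  intro u hun i t hrt hsu htu hcomm
  have hsul : cs.length (cs.simple i * u) < cs.length u := hsu.2
  have hlen1 : cs.length u = cs.length (cs.simple i * u) + 1 := by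
    rcases cs.length_simple_mul u i with h | h <;> omega
  obtain ⟨ω₁, hω₁red, hω₁⟩ := cs.exists_reduced_word' (cs.simple i * u)
  have hω₁len : ω₁.length = cs.length (cs.simple i * u) := by
    rw [hω₁, hω₁red]
  set Ω : List B := i :: ω₁ with hΩdef
  have hπΩ : cs.wordProd Ω = u := by
    rw [hΩdef, cs.wordProd_cons, ← hω₁, cs.simple_mul_simple_cancel_left]
  have hΩlen : Ω.length = cs.length u := by
    rw [hΩdef, List.length_cons, hω₁len]; omega
  have hredΩ : cs.IsReduced Ω := by
    show cs.length (cs.wordProd Ω) = Ω.length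
    rw [hπΩ, hΩlen]
  have hmem : t ∈ cs.leftInvSeq Ω :=
    mem_leftInvSeq_of_isLeftInversion cs hra (by rw [hπΩ]; exact htu)
  obtain ⟨k, hk, hEq⟩ := List.mem_iff_getElem.mp hmem
  rw [cs.length_leftInvSeq] at hk
  by_cases hkfull : k + 1 = Ω.length
  case neg =>
    -- truncate to a shorter chamber and use the inductive hypothesis
    have hk1 : k + 1 < Ω.length := by omega
    set Ω' := Ω.take (k+1) with hΩ'def
    have hred' : cs.IsReduced Ω' := hredΩ.take (k+1)
    have hlen' : cs.length (cs.wordProd Ω') = k + 1 := by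
      rw [hred', hΩ'def, List.length_take]; omega
    have htmem : t ∈ cs.leftInvSeq Ω' := by
      rw [hΩ'def, cs.leftInvSeq_take]
      rw [← hEq]
      have hklt : k < ((cs.leftInvSeq Ω).take (k+1)).length := by
        rw [List.length_take, cs.length_leftInvSeq]; omega
      have : ((cs.leftInvSeq Ω).take (k+1))[k]'hklt = (cs.leftInvSeq Ω)[k]'(by
          rw [cs.length_leftInvSeq]; exact hk) := List.getElem_take
      rw [← this]
      exact List.getElem_mem _
    have hsmem : cs.simple i ∈ cs.leftInvSeq Ω' := by
      have hΩ' : Ω' = i :: ω₁.take k := by rw [hΩ'def, hΩdef, List.take_succ_cons]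
      rw [hΩ']
      exact head_mem_lis cs i _
    have h1' := cs.isLeftInversion_of_mem_leftInvSeq hred' hsmem
    have h2' := cs.isLeftInversion_of_mem_leftInvSeq hred' htmem
    exact IH (k+1) (by omega) (cs.wordProd Ω') hlen' i t hrt h1' h2' hcomm
  case pos =>
  -- t is the last left inversion of Ω
  rcases eq_or_ne ω₁ [] with hnil | hne
  · -- Ω = [i], so t = s i: contradiction with non-commuting
    exfalso
    apply hcomm
    subst hnil
    have hΩ1 : Ω.length = 1 := by rw [hΩdef]; rfl
    have hk0 : k = 0 := by omega
    subst hk0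
    simp only [hΩdef, cs.leftInvSeq_singleton, List.getElem_cons_zero] at hEq
    rw [← hEq]
  obtain ⟨η, q, hω₁eq⟩ : ∃ η q, ω₁ = η ++ [q] :=
    ⟨ω₁.dropLast, ω₁.getLast hne, (List.dropLast_append_getLast hne).symm⟩
  have hΩeq : Ω = (i :: η) ++ [q] := by rw [hΩdef, hω₁eq]; rfl
  have hkval : k = η.length + 1 := by
    have : Ω.length = η.length + 2 := by rw [hΩeq]; simp
    omega
  have ht_eq : t = cs.wordProd (i :: η) * cs.simple q * (cs.wordProd (i :: η))⁻¹ := by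
    have hlis : cs.leftInvSeq Ω = cs.leftInvSeq (i :: η)
        ++ [cs.wordProd (i :: η) * cs.simple q * (cs.wordProd (i :: η))⁻¹] := by
      rw [hΩeq, ← List.concat_eq_append, cs.leftInvSeq_concat, List.concat_eq_append]
    have hklt : k < (cs.leftInvSeq Ω).length := by rw [cs.length_leftInvSeq]; exact hk
    have hgd : (cs.leftInvSeq Ω).getD k 1 = t := by
      rw [List.getD_eq_getElem _ 1 hklt]; exact hEq
    rw [hlis] at hgd
    have hidx : k = (cs.leftInvSeq (i :: η)).length := by
      rw [cs.length_leftInvSeq]; simp [hkval]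
    have hlen2 : k < (cs.leftInvSeq (i :: η)
        ++ [cs.wordProd (i :: η) * cs.simple q * (cs.wordProd (i :: η))⁻¹]).length := by
      simp [hidx]
    rw [List.getD_eq_getElem _ 1 hlen2] at hgd
    rw [List.getElem_concat_length hidx] at hgd
    exact hgd.symm
  rcases eq_or_ne η [] with hηnil | hηne
  · -- base case: t = s i * s q * s i
    subst hηnil
    have ht2 : t = cs.simple i * cs.simple q * cs.simple i := by
      rw [ht_eq]; simp [cs.wordProd_singleton, cs.inv_simple]
    have hiq_ne : cs.simple i ≠ cs.simple q := by
      intro h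
      have : cs.wordProd Ω = 1 := by
        rw [hΩeq]
        show cs.wordProd ([i] ++ [q]) = 1
        rw [cs.wordProd_append, cs.wordProd_singleton, cs.wordProd_singleton, ← h,
          cs.simple_mul_simple_self]
      have h0 : cs.length u = 0 := by rw [← hπΩ, this, cs.length_one]
      omega
    have hiq : i ≠ q := fun h => hiq_ne (by rw [h])
    rcases hra i q hiq with h2 | h0
    · exfalso
      apply hcomm
      have hc := simple_comm_of_two cs h2
      have e1 : cs.simple i * t = cs.simple q * cs.simple i := by
        rw [ht2, show cs.simple i * (cs.simple i * cs.simple q * cs.simple i)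
          = (cs.simple i * cs.simple i) * (cs.simple q * cs.simple i) by group,
          cs.simple_mul_simple_self, one_mul]
      have e2 : t * cs.simple i = cs.simple i * cs.simple q := by
        rw [ht2, show cs.simple i * cs.simple q * cs.simple i * cs.simple i
          = cs.simple i * cs.simple q * (cs.simple i * cs.simple i) by group,
          cs.simple_mul_simple_self, mul_one]
      rw [e1, e2]
      exact hc.symm
    · intro v htv
      by_contra hns
      have htne : t ≠ cs.simple i := fun h => hcomm (by rw [h])
      have h1 := (isLeftInversion_smul_iff cs hra hrt htne v).mp htv
      have hconj : cs.simple i * t * cs.simple i = cs.simple q := by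
        rw [ht2, sconj_sconj]
      rw [hconj] at h1
      have h2i : cs.IsLeftInversion (cs.simple i * v) (cs.simple i) :=
        (cs.isReflection_simple i).isLeftInversion_mul_right_iff.mpr hns
      exact lemD cs hra h0 h2i h1
  -- step case: η = j :: η'
  obtain ⟨j, η', rfl⟩ : ∃ j η', η = j :: η' := by
    rcases η with _ | ⟨j, η'⟩
    · exact absurd rfl hηne
    · exact ⟨j, η', rfl⟩
  set c : W := cs.wordProd (j :: η') * cs.simple q * (cs.wordProd (j :: η'))⁻¹ with hcdef
  have hrefl_c : cs.IsReflection c := ⟨cs.wordProd (j :: η'), q, rfl⟩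
  have htc : t = cs.simple i * c * cs.simple i := by
    rw [ht_eq, hcdef, cs.wordProd_cons i (j :: η'), mul_inv_rev, cs.inv_simple]
    group
  have htne : t ≠ cs.simple i := fun h => hcomm (by rw [h])
  have hω₁eq2 : ω₁ = (j :: η') ++ [q] := hω₁eq
  have hsune : ¬ cs.IsLeftInversion (cs.simple i * u) (cs.simple i) :=
    ((cs.isReflection_simple i).not_isLeftInversion_mul_right_iff).mpr hsu
  have hc_inv : cs.IsLeftInversion (cs.simple i * u) c := by
    rw [hω₁]
    apply cs.isLeftInversion_of_mem_leftInvSeq hω₁red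
    rw [hω₁eq2]
    exact last_mem_lis cs (j :: η') q
  have hr_inv : cs.IsLeftInversion (cs.simple i * u) (cs.simple j) := by
    rw [hω₁]
    apply cs.isLeftInversion_of_mem_leftInvSeq hω₁red
    rw [hω₁eq2]
    show cs.simple j ∈ cs.leftInvSeq (j :: (η' ++ [q]))
    exact head_mem_lis cs j _
  have hcne : c ≠ cs.simple i := by
    intro h
    rw [h] at hc_inv
    exact hsune hc_inv
  have hij_ne : i ≠ j := by
    intro h
    subst h
    have : cs.wordProd Ω = cs.wordProd (η' ++ [q]) := by
      rw [hΩeq]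
      show cs.wordProd (i :: (i :: (η' ++ [q]))) = _
      rw [cs.wordProd_cons i (i :: (η' ++ [q])), cs.wordProd_cons i (η' ++ [q]),
        cs.simple_mul_simple_cancel_left]
    have hle := cs.length_wordProd_le (η' ++ [q])
    rw [← this, hπΩ] at hle
    have : Ω.length = η'.length + 3 := by rw [hΩeq]; simp
    simp at hle
    omega
  have hη'len : Ω.length = η'.length + 3 := by rw [hΩeq]; simp
  rcases hra i j hij_ne with h2 | h0
  · -- M i j = 2 : commuting first letters, push the configuration down
    have hcij := simple_comm_of_two cs h2
    have hjij : cs.simple j * cs.simple i * cs.simple j = cs.simple i := by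
      rw [← hcij, mul_assoc, cs.simple_mul_simple_self, mul_one]
    have htnej : t ≠ cs.simple j := by
      intro h
      apply hcomm
      rw [h, hcij]
    set u₂ := cs.simple j * u with hu₂def
    set Ω₂ : List B := i :: (η' ++ [q]) with hΩ₂def
    have hπΩ₂ : cs.wordProd Ω₂ = u₂ := by
      have hu_expand : u = cs.simple i * (cs.simple j * cs.wordProd (η' ++ [q])) := by
        rw [← hπΩ, hΩeq]
        show cs.wordProd ((i :: j :: η') ++ [q]) = _
        rw [show (i :: j :: η') ++ [q] = i :: j :: (η' ++ [q]) by simp,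
          cs.wordProd_cons, cs.wordProd_cons]
      rw [hΩ₂def, cs.wordProd_cons, hu₂def, hu_expand]
      symm
      calc cs.simple j * (cs.simple i * (cs.simple j * cs.wordProd (η' ++ [q])))
          = (cs.simple j * cs.simple i * cs.simple j) * cs.wordProd (η' ++ [q]) := by group
        _ = cs.simple i * cs.wordProd (η' ++ [q]) := by rw [hjij]
    have hΩ₂len : Ω₂.length = η'.length + 2 := by rw [hΩ₂def]; simp
    have hu₂len : cs.length u₂ = η'.length + 2 := by
      have hle : cs.length u₂ ≤ η'.length + 2 := by
        rw [← hπΩ₂]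
        exact (cs.length_wordProd_le Ω₂).trans (by rw [hΩ₂len])
      have hge : cs.length u ≤ cs.length u₂ + 1 := by
        have : u = cs.simple j * u₂ := by rw [hu₂def, cs.simple_mul_simple_cancel_left]
        rw [this]
        have := cs.length_mul_le (cs.simple j) u₂
        rw [cs.length_simple] at this
        omega
      omega
    have hred₂ : cs.IsReduced Ω₂ := by
      show cs.length (cs.wordProd Ω₂) = Ω₂.length
      rw [hπΩ₂, hu₂len, hΩ₂len]
    have hs_inv₂ : cs.IsLeftInversion u₂ (cs.simple i) := by
      rw [← hπΩ₂]
      apply cs.isLeftInversion_of_mem_leftInvSeq hred₂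
      rw [hΩ₂def]
      exact head_mem_lis cs i _
    set t₂ := cs.simple j * t * cs.simple j with ht₂def
    have hrefl_t₂ : cs.IsReflection t₂ := by
      have := hrt.conj (cs.simple j)
      rwa [cs.inv_simple] at this
    have ht₂eq : t₂ = cs.wordProd (i :: η') * cs.simple q * (cs.wordProd (i :: η'))⁻¹ := by
      have hZ : c = cs.simple j * (cs.wordProd η' * cs.simple q * (cs.wordProd η')⁻¹)
          * cs.simple j := by
        rw [hcdef, cs.wordProd_cons, mul_inv_rev, cs.inv_simple]
        group
      calc t₂ = (cs.simple j * cs.simple i * cs.simple j)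
            * (cs.wordProd η' * cs.simple q * (cs.wordProd η')⁻¹)
            * (cs.simple j * cs.simple i * cs.simple j) := by
            rw [ht₂def, htc, hZ]; group
        _ = cs.simple i * (cs.wordProd η' * cs.simple q * (cs.wordProd η')⁻¹)
            * cs.simple i := by rw [hjij]
        _ = cs.wordProd (i :: η') * cs.simple q * (cs.wordProd (i :: η'))⁻¹ := by
            rw [cs.wordProd_cons, mul_inv_rev, cs.inv_simple]; group
    have ht₂_inv : cs.IsLeftInversion u₂ t₂ := by
      rw [← hπΩ₂]
      apply cs.isLeftInversion_of_mem_leftInvSeq hred₂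
      rw [ht₂eq, hΩ₂def]
      show _ ∈ cs.leftInvSeq ((i :: η') ++ [q])
      exact last_mem_lis cs (i :: η') q
    have hcomm₂ : cs.simple i * t₂ ≠ t₂ * cs.simple i := by
      intro h
      apply hcomm
      have := congrArg (fun x => cs.simple j * x * cs.simple j) h
      calc cs.simple i * t
          = (cs.simple j * cs.simple i * cs.simple j) * t := by rw [hjij]
        _ = cs.simple j * (cs.simple i * t₂) * cs.simple j := by
            rw [ht₂def, show cs.simple j * (cs.simple i * (cs.simple j * t * cs.simple j))
                * cs.simple j
              = cs.simple j * cs.simple i * cs.simple j * t * (cs.simple j * cs.simple j)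
              by group, cs.simple_mul_simple_self, mul_one]
        _ = cs.simple j * (t₂ * cs.simple i) * cs.simple j := by rw [h]
        _ = t * (cs.simple j * cs.simple i * cs.simple j) := by
            rw [ht₂def, show cs.simple j * ((cs.simple j * t * cs.simple j) * cs.simple i)
                * cs.simple j
              = (cs.simple j * cs.simple j) * (t * (cs.simple j * cs.simple i * cs.simple j))
              by group, cs.simple_mul_simple_self, one_mul]
        _ = t * cs.simple i := by rw [hjij]
    have hrec := IH (cs.length u₂) (by omega) u₂ rfl i t₂ hrefl_t₂ hs_inv₂ ht₂_inv hcomm₂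
    intro v htv
    have h1 : cs.IsLeftInversion (cs.simple j * v) t₂ := by
      have := (isLeftInversion_smul_iff cs hra hrt htnej v).mp htv
      rwa [← ht₂def] at this
    have h2 := hrec (cs.simple j * v) h1
    have hsi_ne_sj : cs.simple i ≠ cs.simple j := simple_ne_simple cs hra hij_ne
    have := (isLeftInversion_smul_iff cs hra (cs.isReflection_simple i) hsi_ne_sj v)
    rw [hjij] at this
    exact this.mpr h2
  · -- M i j = 0
    rcases eq_or_ne c (cs.simple j) with hcr | hcr
    · -- c = s j, so t = s i s j s i : direct contradiction with lemD
      intro v htv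
      by_contra hns
      have h1 := (isLeftInversion_smul_iff cs hra hrt htne v).mp htv
      have hconj : cs.simple i * t * cs.simple i = cs.simple j := by
        rw [htc, sconj_sconj, hcr]
      rw [hconj] at h1
      have h2i : cs.IsLeftInversion (cs.simple i * v) (cs.simple i) :=
        (cs.isReflection_simple i).isLeftInversion_mul_right_iff.mpr hns
      exact lemD cs hra h0 h2i h1
    rcases em (cs.simple j * c = c * cs.simple j) with hrc | hrc
    · -- s j commutes with c
      have hcsj : cs.simple j * c * cs.simple j = c := by
        rw [hrc, mul_assoc, cs.simple_mul_simple_self, mul_one]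
      set u₃ := cs.simple j * (cs.simple i * u) with hu₃def
      have hπu₃ : cs.wordProd (η' ++ [q]) = u₃ := by
        rw [hu₃def, hω₁, hω₁eq2]
        show _ = cs.simple j * cs.wordProd ((j :: η') ++ [q])
        rw [show (j :: η') ++ [q] = j :: (η' ++ [q]) by simp, cs.wordProd_cons,
          cs.simple_mul_simple_cancel_left]
      have hu₃len : cs.length u₃ = η'.length + 1 := by
        have h1 : cs.length u₃ < cs.length (cs.simple i * u) := hr_inv.2
        have h2' : cs.length (cs.simple i * u) ≤ cs.length u₃ + 1 := by
          have : cs.simple i * u = cs.simple j * u₃ := by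
            rw [hu₃def, cs.simple_mul_simple_cancel_left]
          rw [this]
          have := cs.length_mul_le (cs.simple j) u₃
          rw [cs.length_simple] at this
          omega
        have h3 : cs.length (cs.simple i * u) = η'.length + 2 := by
          rw [← hω₁len, hω₁eq2]; simp
        omega
      have hred₃ : cs.IsReduced (η' ++ [q]) := by
        show cs.length (cs.wordProd (η' ++ [q])) = (η' ++ [q]).length
        rw [hπu₃, hu₃len]; simp
      have hc₃ : cs.IsLeftInversion u₃ c := by
        have := (isLeftInversion_smul_iff cs hra (x := c) hrefl_c
          (by exact hcr) (cs.simple i * u)).mp hc_inv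
        rwa [hcsj, ← hu₃def] at this
      have hZ : c = cs.simple j * (cs.wordProd η' * cs.simple q * (cs.wordProd η')⁻¹)
          * cs.simple j := by
        rw [hcdef, cs.wordProd_cons, mul_inv_rev, cs.inv_simple]
        group
      have hcE : c = cs.wordProd η' * cs.simple q * (cs.wordProd η')⁻¹ := by
        have h' := hcsj
        rw [hZ, sconj_sconj] at h'
        rw [hZ]
        exact h'.symm
      rcases lt_or_gt_of_ne (cs.length_simple_mul_ne u₃ i) with hlt3 | hgt3
      · -- s i is also an inversion of u₃: contradiction via IH on (i, c)
        have hs₃ : cs.IsLeftInversion u₃ (cs.simple i) := ⟨cs.isReflection_simple i, hlt3⟩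
        have hscne : cs.simple i * c ≠ c * cs.simple i := by
          intro h
          apply hcomm
          have ht_eq_c : t = c := by
            rw [htc, h, mul_assoc, cs.simple_mul_simple_self, mul_one]
          rw [ht_eq_c, h]
        have hrec := IH (cs.length u₃) (by omega) u₃ rfl i c hrefl_c hs₃ hc₃ hscne
        exact absurd (hrec (cs.simple i * u) hc_inv) hsune
      · -- ℓ(s i * u₃) > ℓ(u₃): build the shorter chamber s i * u₃ containing both walls
        set Ω₄ : List B := i :: (η' ++ [q]) with hΩ₄def
        have hπ₄ : cs.wordProd Ω₄ = cs.simple i * u₃ := by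
          rw [hΩ₄def, cs.wordProd_cons, hπu₃]
        have hl₄ : cs.length (cs.simple i * u₃) = η'.length + 2 := by
          rcases cs.length_simple_mul u₃ i with h | h <;> omega
        have hred₄ : cs.IsReduced Ω₄ := by
          show cs.length (cs.wordProd Ω₄) = Ω₄.length
          rw [hπ₄, hl₄, hΩ₄def]; simp
        have hs₄ : cs.IsLeftInversion (cs.simple i * u₃) (cs.simple i) := by
          rw [← hπ₄]
          apply cs.isLeftInversion_of_mem_leftInvSeq hred₄
          rw [hΩ₄def]
          exact head_mem_lis cs i _
        have ht₄ : cs.IsLeftInversion (cs.simple i * u₃) t := by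
          rw [← hπ₄]
          apply cs.isLeftInversion_of_mem_leftInvSeq hred₄
          have htlast : t = cs.wordProd (i :: η') * cs.simple q
              * (cs.wordProd (i :: η'))⁻¹ := by
            rw [htc, hcE, cs.wordProd_cons, mul_inv_rev, cs.inv_simple]
            group
          rw [htlast, hΩ₄def]
          show _ ∈ cs.leftInvSeq ((i :: η') ++ [q])
          exact last_mem_lis cs (i :: η') q
        exact IH (cs.length (cs.simple i * u₃)) (by omega) (cs.simple i * u₃) rfl
          i t hrt hs₄ ht₄ hcomm
    · -- s j and c do not commute: IH on the pair (j, c) at the chamber s i * u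
      have hrec := IH (cs.length (cs.simple i * u)) (by omega) (cs.simple i * u) rfl
        j c hrefl_c hr_inv hc_inv hrc
      intro v htv
      by_contra hns
      have h1 := (isLeftInversion_smul_iff cs hra hrt htne v).mp htv
      have hconj : cs.simple i * t * cs.simple i = c := by rw [htc, sconj_sconj]
      rw [hconj] at h1
      have h2i : cs.IsLeftInversion (cs.simple i * v) (cs.simple i) :=
        (cs.isReflection_simple i).isLeftInversion_mul_right_iff.mpr hns
      have h2j := hrec (cs.simple i * v) h1
      exact lemD cs hra h0 h2i h2j

end RAproof

namespace RAproof

variable {B W : Type*} [Group W] {M : CoxeterMatrix B} (cs : CoxeterSystem M W)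

/-- Convenient form of the nesting lemma. -/
theorem core' (hra : M.IsRightAngled) {i : B} {t u : W} (ht : cs.IsReflection t)
    (h1 : cs.IsLeftInversion u (cs.simple i)) (h2 : cs.IsLeftInversion u t)
    (hc : cs.simple i * t ≠ t * cs.simple i) :
    ∀ v : W, cs.IsLeftInversion v t → cs.IsLeftInversion v (cs.simple i) :=
  core_aux cs hra (cs.length u) u rfl i t ht h1 h2 hc

/-- A reflection whose wall `≤` the wall of a simple reflection is that simple reflection. -/
theorem eq_simple_of_wallLE {t : W} (ht : cs.IsReflection t) (i : B)
    (hle : wallLE cs t (cs.simple i)) : t = cs.simple i := by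
  have h1 : ¬ (cs.length (cs.simple i) < cs.length (cs.simple i * cs.simple i)) := by
    rw [cs.simple_mul_simple_self, cs.length_one, cs.length_simple]; omega
  have h2 : ¬ (cs.length (cs.simple i) < cs.length (t * cs.simple i)) :=
    fun hlt => h1 (hle _ hlt)
  have hpar : cs.length (t * cs.simple i) % 2 = 0 := by
    have hmod := cs.length_mul_mod_two t (cs.simple i)
    rw [cs.length_simple] at hmod
    obtain ⟨m, hm⟩ := ht.odd_length
    omega
  have h0 : cs.length (t * cs.simple i) = 0 := by
    rw [cs.length_simple] at h2; omega
  have ht1 : t * cs.simple i = 1 := cs.length_eq_zero_iff.mp h0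
  calc t = t * cs.simple i * cs.simple i := by rw [cs.simple_mul_simple_cancel_right]
    _ = cs.simple i := by rw [ht1, one_mul]

theorem not_inv_of_lt {t v : W} (h : cs.length v < cs.length (t * v)) :
    ¬ cs.IsLeftInversion v t := fun hinv => by have := hinv.2; omega

theorem lt_of_not_inv {t v : W} (ht : cs.IsReflection t) (h : ¬ cs.IsLeftInversion v t) :
    cs.length v < cs.length (t * v) := by
  have hne := ht.length_mul_right_ne v
  have : ¬ cs.length (t * v) < cs.length v := fun hl => h ⟨ht, hl⟩
  omega

end RAproof

open RAproof

/-- **The first antichain correspondence in Case 2 of the proof of Proposition 5.1.**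
If `ℓ(s*u) < ℓ(u)` and `ℓ(s*w) > ℓ(w)`, then `h ↦ h ∪ {s}` is a bijection from the
antichains of `P(1|u,w)` onto the antichains of `P(1|u,s*w)` containing `s`;
moreover for corresponding antichains `k = h ∪ {s}` one has `#k = #h + 1`,
`ht(k) = ht(h) + 1`, and `s · ∏_{t∈k} t = ∏_{t∈h} t`. -/
theorem antichain_insert_bijection
    {B W : Type*} [Group W] {M : CoxeterMatrix B} (cs : CoxeterSystem M W)
    (hra : M.IsRightAngled) (i : B) (u w : W)
    (hsu : cs.length (cs.simple i * u) < cs.length u)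
    (hsw : cs.length w < cs.length (cs.simple i * w)) :
    Set.BijOn (fun h : Finset W => insert (cs.simple i) h)
      {h | IsAntichainIn cs u w h}
      {k | IsAntichainIn cs u (cs.simple i * w) k ∧ cs.simple i ∈ k} ∧
    ∀ h : Finset W, IsAntichainIn cs u w h →
      (insert (cs.simple i) h).card = h.card + 1 ∧
      acHeight cs u (cs.simple i * w) (insert (cs.simple i) h) =
        acHeight cs u w h + 1 ∧
      cs.simple i * acProd (insert (cs.simple i) h) = acProd h := by
  have refl_s := cs.isReflection_simple i
  have hs_inv_u : cs.IsLeftInversion u (cs.simple i) := ⟨refl_s, hsu⟩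
  have hs_not_inv_w : ¬ cs.IsLeftInversion w (cs.simple i) := not_inv_of_lt cs hsw
  -- membership of `s i` in the two separation sets
  have hs_mem_sw : cs.simple i ∈ sepSet cs u (cs.simple i * w) := by
    refine ⟨refl_s, hsu, ?_⟩
    rw [cs.simple_mul_simple_cancel_left]
    exact hsw
  have hs_not_mem_w : cs.simple i ∉ sepSet cs u w := fun hmem => by
    have := hmem.2.2; omega
  -- every element of `sepSet u w` commutes with `s i`
  have comm_of_sep : ∀ t ∈ sepSet cs u w, cs.simple i * t = t * cs.simple i := by
    intro t ht
    by_contra hc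
    have := core' cs hra ht.1 hs_inv_u ⟨ht.1, ht.2.1⟩ hc w ⟨ht.1, ht.2.2⟩
    exact hs_not_inv_w this
  have tne_of_sep : ∀ t ∈ sepSet cs u w, t ≠ cs.simple i := by
    intro t ht he
    rw [he] at ht
    exact hs_not_mem_w ht
  -- transfer of separation sets
  have sep_w_to_sw : ∀ t ∈ sepSet cs u w, t ∈ sepSet cs u (cs.simple i * w) := by
    intro t ht
    have hcm := comm_of_sep t ht
    have htne := tne_of_sep t ht
    have hconj : cs.simple i * t * cs.simple i = t := by
      rw [hcm, mul_assoc, cs.simple_mul_simple_self, mul_one]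
    have := (isLeftInversion_smul_iff cs hra ht.1 htne w).mp ⟨ht.1, ht.2.2⟩
    rw [hconj] at this
    exact ⟨ht.1, ht.2.1, this.2⟩
  have sep_sw_to_w : ∀ t ∈ sepSet cs u (cs.simple i * w), t ≠ cs.simple i →
      cs.simple i * t = t * cs.simple i → t ∈ sepSet cs u w := by
    intro t ht htne hcm
    have hconj : cs.simple i * t * cs.simple i = t := by
      rw [hcm, mul_assoc, cs.simple_mul_simple_self, mul_one]
    have := (isLeftInversion_smul_iff cs hra ht.1 htne w).mpr
      (by rw [hconj]; exact ⟨ht.1, ht.2.2⟩)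
    exact ⟨ht.1, ht.2.1, this.2⟩
  -- incomparabilities
  have not_lt_s_of_inv_w : ∀ t' : W, cs.length (t' * w) < cs.length w →
      ¬ wallLT cs (cs.simple i) t' := by
    rintro t' hinv ⟨hle, _⟩
    have := hle w hsw
    omega
  have not_lt_to_s : ∀ t' : W, cs.IsReflection t' → ¬ wallLT cs t' (cs.simple i) := by
    rintro t' hrt' ⟨hle, hne⟩
    exact hne (eq_simple_of_wallLE cs hrt' i hle)
  -- commuting criterion inside `sepSet u (s i * w)`
  have comm_of_sep_sw : ∀ t ∈ sepSet cs u (cs.simple i * w), t ≠ cs.simple i →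
      ¬ wallLT cs (cs.simple i) t → cs.simple i * t = t * cs.simple i := by
    intro t ht htne hnlt
    by_contra hc
    apply hnlt
    refine ⟨?_, fun he => htne he.symm⟩
    intro v hv
    by_contra h'
    have hinv : cs.IsLeftInversion v t := by
      have hne := ht.1.length_mul_right_ne v
      exact ⟨ht.1, by omega⟩
    have := core' cs hra ht.1 hs_inv_u ⟨ht.1, ht.2.1⟩ hc v hinv
    have := this.2
    omega
  -- the forward map on antichains
  have hforward : ∀ h : Finset W, IsAntichainIn cs u w h →
      IsAntichainIn cs u (cs.simple i * w) (insert (cs.simple i) h) := by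
    intro h hh
    obtain ⟨hsub, hcm, hinc⟩ := hh
    refine ⟨?_, ?_, ?_⟩
    · intro t htmem
      rw [Finset.coe_insert, Set.mem_insert_iff] at htmem
      rcases htmem with rfl | htmem
      · exact hs_mem_sw
      · exact sep_w_to_sw t (hsub htmem)
    · intro t htmem t' ht'mem
      rw [Finset.mem_insert] at htmem ht'mem
      rcases htmem with rfl | htmem <;> rcases ht'mem with rfl | ht'mem
      · rfl
      · exact comm_of_sep t' (hsub ht'mem)
      · exact (comm_of_sep t (hsub htmem)).symm
      · exact hcm t htmem t' ht'mem
    · intro t htmem t' ht'mem htne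
      rw [Finset.mem_insert] at htmem ht'mem
      rcases htmem with rfl | htmem <;> rcases ht'mem with rfl | ht'mem
      · exact absurd rfl htne
      · exact not_lt_s_of_inv_w t' (hsub ht'mem).2.2
      · exact not_lt_to_s t (hsub htmem).1
      · exact hinc t htmem t' ht'mem htne
  have hs_notin : ∀ h : Finset W, IsAntichainIn cs u w h → cs.simple i ∉ h := by
    intro h hh hmem
    exact hs_not_mem_w (hh.1 hmem)
  constructor
  · refine ⟨?_, ?_, ?_⟩
    · -- MapsTo
      intro h hh
      exact ⟨hforward h hh, Finset.mem_insert_self _ _⟩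
    · -- InjOn
      intro h1 h1m h2 h2m heq
      have e1 := Finset.erase_insert (hs_notin h1 h1m)
      have e2 := Finset.erase_insert (hs_notin h2 h2m)
      rw [← e1, ← e2]
      simp only at heq
      rw [heq]
    · -- SurjOn
      intro k hk
      obtain ⟨⟨hsub, hcm, hinc⟩, hsk⟩ := hk
      refine ⟨k.erase (cs.simple i), ?_, ?_⟩
      · show IsAntichainIn cs u w (k.erase (cs.simple i))
        refine ⟨?_, ?_, ?_⟩
        · intro t htmem
          rw [Finset.coe_erase, Set.mem_diff] at htmem
          obtain ⟨htk, htne⟩ := htmem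
          have hcomm : cs.simple i * t = t * cs.simple i :=
            (hcm t htk (cs.simple i) hsk).symm
          exact sep_sw_to_w t (hsub htk) (by simpa using htne) hcomm
        · intro t ht t' ht'
          exact hcm t (Finset.mem_of_mem_erase ht) t' (Finset.mem_of_mem_erase ht')
        · intro t ht t' ht' htne
          exact hinc t (Finset.mem_of_mem_erase ht) t' (Finset.mem_of_mem_erase ht') htne
      · show insert (cs.simple i) (k.erase (cs.simple i)) = k
        exact Finset.insert_erase hsk
  · intro h hh
    have hsnotin := hs_notin h hh
    refine ⟨Finset.card_insert_of_notMem hsnotin, ?_, ?_⟩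
    · -- heights
      show Set.ncard _ = Set.ncard _ + 1
      have hsetEq : {t' | t' ∈ sepSet cs u (cs.simple i * w) ∧
            ∀ t ∈ insert (cs.simple i) h, ¬ wallLT cs t t'}
          = insert (cs.simple i)
            {t' | t' ∈ sepSet cs u w ∧ ∀ t ∈ h, ¬ wallLT cs t t'} := by
        ext t'
        simp only [Set.mem_insert_iff, Set.mem_setOf_eq]
        constructor
        · rintro ⟨hmem, hcond⟩
          rcases eq_or_ne t' (cs.simple i) with rfl | hne
          · exact Or.inl rfl
          · refine Or.inr ⟨?_, fun t htm => hcond t (Finset.mem_insert_of_mem htm)⟩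
            have hnlt := hcond (cs.simple i) (Finset.mem_insert_self _ _)
            exact sep_sw_to_w t' hmem hne (comm_of_sep_sw t' hmem hne hnlt)
        · rintro (rfl | ⟨hmem, hcond⟩)
          · refine ⟨hs_mem_sw, ?_⟩
            intro t htm
            rw [Finset.mem_insert] at htm
            rcases htm with rfl | htm
            · rintro ⟨_, hne⟩; exact hne rfl
            · exact not_lt_to_s t (hh.1 htm).1
          · refine ⟨sep_w_to_sw t' hmem, ?_⟩
            intro t htm
            rw [Finset.mem_insert] at htm
            rcases htm with rfl | htm
            · exact not_lt_s_of_inv_w t' hmem.2.2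
            · exact hcond t htm
      rw [hsetEq]
      have hfin : {t' | t' ∈ sepSet cs u w ∧ ∀ t ∈ h, ¬ wallLT cs t t'}.Finite := by
        apply Set.Finite.subset (finite_leftInvSet cs hra u)
        rintro t' ⟨⟨h1, h2, _⟩, _⟩
        exact ⟨h1, h2⟩
      have hsmem : cs.simple i ∉ {t' | t' ∈ sepSet cs u w ∧ ∀ t ∈ h, ¬ wallLT cs t t'} :=
        fun hx => hs_not_mem_w hx.1
      exact Set.ncard_insert_of_notMem hsmem hfin
    · -- products
      have hcomm_ins : ∀ a ∈ insert (cs.simple i) h, ∀ b ∈ insert (cs.simple i) h,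
          a ≠ b → a * b = b * a := by
        intro a ha b hb _
        exact (hforward h hh).2.1 a ha b hb
      have hcomm_h : ∀ a ∈ h, ∀ b ∈ h, a ≠ b → a * b = b * a := by
        intro a ha b hb _
        exact hh.2.1 a ha b hb
      rw [acProd, acProd, dif_pos hcomm_ins, dif_pos hcomm_h]
      erw [Finset.noncommProd_insert_of_notMem _ _ _ _ hsnotin]
      rw [id, ← mul_assoc, cs.simple_mul_simple_self, one_mul]
end

section
/- Let (W,S) be a right-angled Coxeter system, let s ∈ S, and let u, w ∈ W satisfy ℓ(s*u) < ℓ(u) and ℓ(s*w) > ℓ(w). Then the map k ↦ k^s = {s*c*s : c ∈ k} is a bijection from the set of antichains of P(1|u,s*w) not containing s onto the set of antichains of P(1|s*u,w). Moreover, for corresponding antichains h = k^s: #k = #h; ht(k) = ht(h) + 1 (heights computed in P(1|u,s*w) and in P(1|s*u,w) respectively); and s·(∏_{t∈k} t) = (∏_{t∈h} t)·s. -/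
open scoped Classical

namespace RAHelper

variable {B W : Type*} [Group W] {M : CoxeterMatrix B} (cs : CoxeterSystem M W)

/-- The generator action on `W × ℤˣ`. -/
noncomputable def sigmaFun (i : B) (p : W × ℤˣ) : W × ℤˣ :=
  (cs.simple i * p.1 * cs.simple i, if p.1 = cs.simple i then -p.2 else p.2)

theorem sigmaFun_involutive (i : B) : Function.Involutive (sigmaFun cs i) := by
  rintro ⟨t, ε⟩
  simp only [sigmaFun]
  by_cases h : t = cs.simple i
  · subst h
    simp [cs.simple_mul_simple_self]
  · have h2 : cs.simple i * t * cs.simple i ≠ cs.simple i := by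
      intro hc
      apply h
      have := congrArg (fun x => cs.simple i * x * cs.simple i) hc
      simpa [mul_assoc, cs.simple_mul_simple_self, cs.simple_mul_simple_cancel_left] using this
    rw [if_neg h, if_neg h2]
    exact Prod.ext (by simp [mul_assoc, cs.simple_mul_simple_cancel_left,
      cs.simple_mul_simple_self]) rfl


/-- The generator action as a permutation. -/
noncomputable def sigma (i : B) : Equiv.Perm (W × ℤˣ) :=
  (sigmaFun_involutive cs i).toPerm

@[simp] theorem sigma_apply (i : B) (p : W × ℤˣ) :
    sigma cs i p = (cs.simple i * p.1 * cs.simple i,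
      if p.1 = cs.simple i then -p.2 else p.2) := rfl

theorem sigma_liftable (hra : M.IsRightAngled) :
    M.IsLiftable (fun i => sigma cs i) := by
  intro i j
  rcases eq_or_ne i j with rfl | hij
  · rw [M.diagonal i, pow_one]
    exact Equiv.ext fun p => by
      rw [Equiv.Perm.mul_apply]; exact (sigmaFun_involutive cs i) p
  · rcases hra i j hij with h2 | h0
    · rw [h2]
      have hcomm : cs.simple i * cs.simple j = cs.simple j * cs.simple i := by
        have := cs.simple_mul_simple_pow i j
        rw [h2, pow_two] at this
        have h1 : (cs.simple i * cs.simple j)⁻¹ = cs.simple j * cs.simple i := by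
          rw [mul_inv_rev, cs.inv_simple, cs.inv_simple]
        rw [← h1]
        exact (inv_eq_of_mul_eq_one_right this).symm
      have hba : ∀ x : W, cs.simple j * (cs.simple i * x) = cs.simple i * (cs.simple j * x) :=
        fun x => by rw [← mul_assoc, ← hcomm, mul_assoc]
      have cancel : ∀ (k : B) (x y : W),
          cs.simple k * x * cs.simple k = y ↔ x = cs.simple k * y * cs.simple k := by
        intro k x y
        constructor
        · rintro rfl
          simp [mul_assoc, cs.simple_mul_simple_cancel_left, cs.simple_mul_simple_self]
        · rintro rfl
          simp [mul_assoc, cs.simple_mul_simple_cancel_left, cs.simple_mul_simple_self]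
      have haba : cs.simple i * cs.simple j * cs.simple i = cs.simple j := by
        rw [hcomm]; exact cs.simple_mul_simple_cancel_right i
      have hbab : cs.simple j * cs.simple i * cs.simple j = cs.simple i := by
        rw [← hcomm]; exact cs.simple_mul_simple_cancel_right j
      have htriple : ∀ k : B, cs.simple k * cs.simple k * cs.simple k = cs.simple k := by
        intro k; rw [cs.simple_mul_simple_self]; exact one_mul _
      apply Equiv.ext
      rintro ⟨t, ε⟩
      rw [pow_two]
      simp only [Equiv.Perm.mul_apply, sigma_apply, Equiv.Perm.one_apply]
      have hc3 : cs.simple i * (cs.simple j * t * cs.simple j) * cs.simple i = cs.simple j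
          ↔ t = cs.simple j := by
        rw [cancel, haba, cancel, htriple]
      have hc4 : cs.simple j * (cs.simple i * (cs.simple j * t * cs.simple j) * cs.simple i) *
          cs.simple j = cs.simple i ↔ cs.simple j * t * cs.simple j = cs.simple i := by
        rw [cancel, hbab, cancel, htriple]
      have hfst : cs.simple i * (cs.simple j * (cs.simple i * (cs.simple j * t * cs.simple j) *
          cs.simple i) * cs.simple j) * cs.simple i = t := by
        simp [mul_assoc, hba, cs.simple_mul_simple_cancel_left, cs.simple_mul_simple_self]
      refine Prod.ext hfst ?_
      simp only [hc3, hc4]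
      by_cases h2 : cs.simple j * t * cs.simple j = cs.simple i <;>
        by_cases h1 : t = cs.simple j
      · simp only [if_pos h2, if_pos h1, neg_neg]
      · simp only [if_pos h2, if_neg h1, neg_neg]
      · simp only [if_neg h2, if_pos h1, neg_neg]
      · simp only [if_neg h2, if_neg h1, neg_neg]
    · rw [h0, pow_zero]


variable (hra : M.IsRightAngled)

/-- The sign representation `W →* Perm (W × ℤˣ)`. -/
noncomputable def mu : W →* Equiv.Perm (W × ℤˣ) :=
  cs.lift ⟨fun i => sigma cs i, sigma_liftable cs hra⟩

@[simp] theorem mu_simple (i : B) : mu cs hra (cs.simple i) = sigma cs i :=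
  cs.lift_apply_simple (sigma_liftable cs hra) i

theorem mu_wordProd (ω : List B) (t : W) (ε : ℤˣ) :
    mu cs hra (cs.wordProd ω) (t, ε) =
      (cs.wordProd ω * t * (cs.wordProd ω)⁻¹,
        ε * (-1 : ℤˣ) ^ (List.count t (cs.rightInvSeq ω))) := by
  induction ω generalizing t ε with
  | nil => simp [cs.wordProd_nil]
  | cons i ω ih =>
    rw [cs.wordProd_cons, map_mul, Equiv.Perm.mul_apply, ih, mu_simple, sigma_apply]
    have hris : cs.rightInvSeq (i :: ω) =
        ((cs.wordProd ω)⁻¹ * cs.simple i * cs.wordProd ω) :: cs.rightInvSeq ω := rfl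
    have hcond : (cs.wordProd ω * t * (cs.wordProd ω)⁻¹ = cs.simple i)
        ↔ t = (cs.wordProd ω)⁻¹ * cs.simple i * cs.wordProd ω := by
      constructor
      · rintro h
        rw [← h]; group
      · rintro rfl; group
    refine Prod.ext ?_ ?_
    · show cs.simple i * (cs.wordProd ω * t * (cs.wordProd ω)⁻¹) * cs.simple i = _
      rw [mul_inv_rev, cs.inv_simple]; group
    · show (if cs.wordProd ω * t * (cs.wordProd ω)⁻¹ = cs.simple i then
          -(ε * (-1 : ℤˣ) ^ (List.count t (cs.rightInvSeq ω)))
          else ε * (-1 : ℤˣ) ^ (List.count t (cs.rightInvSeq ω)))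
          = ε * (-1 : ℤˣ) ^ (List.count t (cs.rightInvSeq (i :: ω)))
      rw [hris, List.count_cons]
      simp only [beq_iff_eq]
      by_cases h : t = (cs.wordProd ω)⁻¹ * cs.simple i * cs.wordProd ω
      · rw [if_pos (hcond.mpr h), if_pos h.symm, pow_add, pow_one, mul_neg_one, mul_neg]
      · rw [if_neg (fun hc => h (hcond.mp hc)), if_neg (fun hc => h hc.symm), add_zero]

/-- The sign cocycle. -/
noncomputable def eta (w t : W) : ℤˣ := ((mu cs hra w) (t, 1)).2

theorem eta_wordProd (ω : List B) (t : W) :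
    eta cs hra (cs.wordProd ω) t = (-1 : ℤˣ) ^ (List.count t (cs.rightInvSeq ω)) := by
  unfold eta
  rw [mu_wordProd]
  exact one_mul _

theorem eta_spec (w t : W) (ε : ℤˣ) :
    mu cs hra w (t, ε) = (w * t * w⁻¹, ε * eta cs hra w t) := by
  obtain ⟨ω, _, rfl⟩ := cs.exists_reduced_word' w
  rw [mu_wordProd, eta_wordProd]

theorem eta_mul (w₁ w₂ t : W) :
    eta cs hra (w₁ * w₂) t = eta cs hra w₂ t * eta cs hra w₁ (w₂ * t * w₂⁻¹) := by
  have h1 : mu cs hra (w₁ * w₂) (t, 1)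
      = ((w₁ * w₂) * t * (w₁ * w₂)⁻¹, 1 * eta cs hra (w₁ * w₂) t) := eta_spec cs hra _ t 1
  have h2 : mu cs hra (w₁ * w₂) (t, 1)
      = (w₁ * (w₂ * t * w₂⁻¹) * w₁⁻¹,
        1 * eta cs hra w₂ t * eta cs hra w₁ (w₂ * t * w₂⁻¹)) := by
    rw [map_mul, Equiv.Perm.mul_apply, eta_spec, eta_spec]
  have h3 := congrArg Prod.snd (h1.symm.trans h2)
  simpa using h3

theorem eta_one (t : W) : eta cs hra 1 t = 1 := by
  unfold eta
  rw [map_one]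
  rfl

theorem eta_simple (i : B) (t : W) :
    eta cs hra (cs.simple i) t = if t = cs.simple i then -1 else 1 := by
  unfold eta
  rw [mu_simple]
  by_cases h : t = cs.simple i <;> simp [sigma_apply, h]

theorem eta_inv_conj (w t : W) : eta cs hra w⁻¹ (w * t * w⁻¹) = eta cs hra w t := by
  have h := eta_mul cs hra w⁻¹ w t
  rw [inv_mul_cancel, eta_one] at h
  have h2 := congrArg (fun x => eta cs hra w t * x) h
  simpa [← mul_assoc, Int.units_mul_self] using h2.symm

theorem eta_reflection_self {t : W} (ht : cs.IsReflection t) : eta cs hra t t = -1 := by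
  obtain ⟨v, i, rfl⟩ := ht
  set s₀ := cs.simple i with hs₀
  set t := v * s₀ * v⁻¹ with htdef
  have hdec : t = v * (s₀ * v⁻¹) := by rw [htdef, mul_assoc]
  have e1 : eta cs hra t t = eta cs hra (s₀ * v⁻¹) t * eta cs hra v ((s₀ * v⁻¹) * t * (s₀ * v⁻¹)⁻¹) := by
    rw [hdec, eta_mul]
  have hin : (s₀ * v⁻¹) * t * (s₀ * v⁻¹)⁻¹ = s₀ := by
    rw [htdef, hs₀]
    group
  have e2 : eta cs hra (s₀ * v⁻¹) t = eta cs hra v⁻¹ t * eta cs hra s₀ (v⁻¹ * t * (v⁻¹)⁻¹) := by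
    rw [eta_mul]
  have hin2 : v⁻¹ * t * (v⁻¹)⁻¹ = s₀ := by rw [htdef]; group
  have e3 : eta cs hra v⁻¹ t = eta cs hra v s₀ := eta_inv_conj cs hra v s₀
  rw [e1, e2, e3, hin, hin2, eta_simple, if_pos rfl, mul_neg_one, neg_mul,
    Int.units_mul_self]


theorem isRightInversion_of_eta {w t : W} (h : eta cs hra w t = -1) :
    cs.IsRightInversion w t := by
  obtain ⟨ω, hred, rfl⟩ := cs.exists_reduced_word' w
  rw [eta_wordProd] at h
  have hodd : Odd (List.count t (cs.rightInvSeq ω)) := by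
    by_contra he
    rw [Nat.not_odd_iff_even] at he
    rw [he.neg_one_pow] at h
    exact absurd h (by decide)
  have hmem : t ∈ cs.rightInvSeq ω := by
    have : 0 < List.count t (cs.rightInvSeq ω) := by
      rcases hodd with ⟨m, hm⟩
      omega
    exact List.count_pos_iff.mp this
  exact cs.isRightInversion_of_mem_rightInvSeq hred hmem

theorem isRightInversion_iff_eta {w t : W} (ht : cs.IsReflection t) :
    cs.IsRightInversion w t ↔ eta cs hra w t = -1 := by
  constructor
  · rintro ⟨-, hlen⟩
    by_contra hne
    have h1 : eta cs hra w t = 1 := by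
      rcases Int.units_eq_one_or (eta cs hra w t) with h | h
      · exact h
      · exact absurd h hne
    have h2 : eta cs hra (w * t) t = -1 := by
      rw [eta_mul cs hra w t t, show t * t * t⁻¹ = t by rw [ht.mul_self, one_mul, ht.inv],
        eta_reflection_self cs hra ht, h1, mul_one]
    have h3 := isRightInversion_of_eta cs hra h2
    have h4 : w * t * t = w := by rw [mul_assoc, ht.mul_self, mul_one]
    have h5 := h3.2
    rw [h4] at h5
    omega
  · exact isRightInversion_of_eta cs hra

theorem length_smul_lt_iff_eta {w t : W} (ht : cs.IsReflection t) :
    cs.length (t * w) < cs.length w ↔ eta cs hra w⁻¹ t = -1 := by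
  constructor
  · intro hl
    exact (isRightInversion_iff_eta cs hra ht).mp (cs.isRightInversion_inv_iff.mpr ⟨ht, hl⟩)
  · intro he
    exact (cs.isRightInversion_inv_iff.mp ((isRightInversion_iff_eta cs hra ht).mpr he)).2


theorem simple_conj_ne {i : B} {t : W} (hne : t ≠ cs.simple i) :
    cs.simple i * t * cs.simple i ≠ cs.simple i := fun h => hne (by
  have h2 := congrArg (fun x => cs.simple i * x * cs.simple i) h
  simpa [mul_assoc, cs.simple_mul_simple_cancel_left, cs.simple_mul_simple_self] using h2)

theorem isReflection_simple_conj {i : B} {t : W} (ht : cs.IsReflection t) :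
    cs.IsReflection (cs.simple i * t * cs.simple i) := by
  have h := ht.conj (cs.simple i)
  rwa [cs.inv_simple] at h

/-- The key conjugation identity for left inversions. -/
theorem conj_smul_lt_iff (hra : M.IsRightAngled) (i : B) {t : W} (ht : cs.IsReflection t) (hne : t ≠ cs.simple i)
    (v : W) :
    cs.length (t * v) < cs.length v ↔
      cs.length ((cs.simple i * t * cs.simple i) * (cs.simple i * v))
        < cs.length (cs.simple i * v) := by
  rw [length_smul_lt_iff_eta cs hra ht,
    length_smul_lt_iff_eta cs hra (isReflection_simple_conj cs ht),
    mul_inv_rev, cs.inv_simple,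
    eta_mul cs hra v⁻¹ (cs.simple i) (cs.simple i * t * cs.simple i)]
  have harg : cs.simple i * (cs.simple i * t * cs.simple i) * (cs.simple i)⁻¹ = t := by
    rw [cs.inv_simple]
    simp [mul_assoc, cs.simple_mul_simple_cancel_left, cs.simple_mul_simple_self]
  rw [harg, eta_simple, if_neg (simple_conj_ne cs hne), one_mul]

theorem not_length_lt_iff {t : W} (ht : cs.IsReflection t) (v : W) :
    ¬ cs.length (t * v) < cs.length v ↔ cs.length v < cs.length (t * v) := by
  have h := ht.length_mul_right_ne v
  omega

theorem leftInv_finite (hra : M.IsRightAngled) (u : W) :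
    {t : W | cs.IsReflection t ∧ cs.length (t * u) < cs.length u}.Finite := by
  obtain ⟨ω, hred, hw⟩ := cs.exists_reduced_word' u⁻¹
  apply Set.Finite.subset (List.finite_toSet (cs.rightInvSeq ω))
  rintro t ⟨ht, hlen⟩
  have he : eta cs hra u⁻¹ t = -1 := (length_smul_lt_iff_eta cs hra ht).mp hlen
  rw [hw, eta_wordProd] at he
  by_contra hmem
  have hz : List.count t (cs.rightInvSeq ω) = 0 := List.count_eq_zero.mpr hmem
  rw [hz, pow_zero] at he
  exact absurd he (by decide)


theorem conj_cancel (i : B) (x : W) :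
    cs.simple i * (cs.simple i * x * cs.simple i) * cs.simple i = x := by
  simp [mul_assoc, cs.simple_mul_simple_cancel_left, cs.simple_mul_simple_self]

theorem conj_gt_iff (hra : M.IsRightAngled) (i : B) {t : W} (ht : cs.IsReflection t)
    (hne : t ≠ cs.simple i) (v : W) :
    cs.length v < cs.length (cs.simple i * t * cs.simple i * v) ↔
      cs.length (cs.simple i * v) < cs.length (t * (cs.simple i * v)) := by
  rw [← not_length_lt_iff cs (isReflection_simple_conj cs ht) v,
    ← not_length_lt_iff cs ht (cs.simple i * v)]
  apply not_congr
  have h := conj_smul_lt_iff cs hra i ht hne (cs.simple i * v)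
  rw [show cs.simple i * (cs.simple i * v) = v from cs.simple_mul_simple_cancel_left i] at h
  exact h.symm


theorem wallLE_conj_aux (hra : M.IsRightAngled) (i : B) {t t' : W}
    (ht : cs.IsReflection t) (ht' : cs.IsReflection t')
    (hne : t ≠ cs.simple i) (hne' : t' ≠ cs.simple i)
    (hle : wallLE cs t t') :
    wallLE cs (cs.simple i * t * cs.simple i) (cs.simple i * t' * cs.simple i) := by
  intro v hv
  rw [conj_gt_iff cs hra i ht hne v] at hv
  rw [conj_gt_iff cs hra i ht' hne' v]
  exact hle _ hv

theorem wallLE_conj_iff (hra : M.IsRightAngled) (i : B) {t t' : W}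
    (ht : cs.IsReflection t) (ht' : cs.IsReflection t')
    (hne : t ≠ cs.simple i) (hne' : t' ≠ cs.simple i) :
    wallLE cs t t' ↔
      wallLE cs (cs.simple i * t * cs.simple i) (cs.simple i * t' * cs.simple i) := by
  constructor
  · exact wallLE_conj_aux cs hra i ht ht' hne hne'
  · intro h
    have h2 := wallLE_conj_aux cs hra i (isReflection_simple_conj cs ht)
      (isReflection_simple_conj cs ht') (simple_conj_ne cs hne) (simple_conj_ne cs hne') h
    rwa [conj_cancel cs i t, conj_cancel cs i t'] at h2

theorem not_wallLE_simple {i : B} {t : W} (ht : cs.IsReflection t)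
    (hne : t ≠ cs.simple i) : ¬ wallLE cs t (cs.simple i) := by
  intro hle
  have h1 : cs.length (cs.simple i) < cs.length (t * cs.simple i) := by
    rw [← not_length_lt_iff cs ht (cs.simple i)]
    intro hlt
    rw [cs.length_simple] at hlt
    have h0 : cs.length (t * cs.simple i) = 0 := by omega
    have := cs.length_eq_zero_iff.mp h0
    apply hne
    have h2 := congrArg (fun x => x * cs.simple i) this
    simpa [mul_assoc, cs.simple_mul_simple_self] using h2
  have h2 := hle (cs.simple i) h1
  rw [cs.simple_mul_simple_self, cs.length_one, cs.length_simple] at h2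
  omega

theorem mem_sepSet_conj_iff (hra : M.IsRightAngled) (i : B) {t : W}
    (ht : cs.IsReflection t) (hne : t ≠ cs.simple i) (u w : W) :
    t ∈ sepSet cs u (cs.simple i * w) ↔
      cs.simple i * t * cs.simple i ∈ sepSet cs (cs.simple i * u) w := by
  have h1 := conj_smul_lt_iff cs hra i ht hne u
  have h2 := conj_smul_lt_iff cs hra i ht hne (cs.simple i * w)
  rw [show cs.simple i * (cs.simple i * w) = w from cs.simple_mul_simple_cancel_left i] at h2
  constructor
  · rintro ⟨-, ha, hb⟩
    exact ⟨isReflection_simple_conj cs ht, h1.mp ha, h2.mp hb⟩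
  · rintro ⟨-, ha, hb⟩
    exact ⟨ht, h1.mpr ha, h2.mpr hb⟩

theorem simple_not_mem_sepSet {i : B} {u : W}
    (hsu : cs.length (cs.simple i * u) < cs.length u) (w : W) :
    cs.simple i ∉ sepSet cs (cs.simple i * u) w := by
  rintro ⟨-, h1, -⟩
  rw [cs.simple_mul_simple_cancel_left] at h1
  omega

theorem simple_mem_sepSet {i : B} {u w : W}
    (hsu : cs.length (cs.simple i * u) < cs.length u)
    (hsw : cs.length w < cs.length (cs.simple i * w)) :
    cs.simple i ∈ sepSet cs u (cs.simple i * w) := by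
  refine ⟨cs.isReflection_simple i, hsu, ?_⟩
  rw [cs.simple_mul_simple_cancel_left]
  exact hsw

theorem noncommProd_image_of_injective {α : Type*} [Monoid α] (e : α → α)
    (he : Function.Injective e) :
    ∀ (s : Finset α) (c1 : (↑(s.image e) : Set α).Pairwise (Function.onFun Commute id))
      (c2 : (↑s : Set α).Pairwise (Function.onFun Commute e)),
      (s.image e).noncommProd id c1 = s.noncommProd e c2 := by
  classical
  intro s
  induction s using Finset.induction_on with
  | empty => intro c1 c2; simp
  | @insert a s ha ih =>
    intro c1 c2
    have himg : (insert a s).image e = insert (e a) (s.image e) := Finset.image_insert e a s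
    have hmem : e a ∉ s.image e := by
      intro hc
      obtain ⟨x, hx, hex⟩ := Finset.mem_image.mp hc
      rw [he hex] at hx
      exact ha hx
    erw [Finset.noncommProd_congr himg (fun x _ => rfl) c1,
      Finset.noncommProd_insert_of_notMem _ _ _ _ hmem,
      Finset.noncommProd_insert_of_notMem _ _ _ _ ha, ih _ _]
    rfl

theorem acProd_conj {W : Type*} [Group W] (g : W) (k : Finset W) :
    acProd (k.image (fun c => g * c * g⁻¹)) = g * acProd k * g⁻¹ := by
  classical
  have he : Function.Injective (fun c : W => g * c * g⁻¹) := by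
    intro a b h
    have h2 := congrArg (fun x => g⁻¹ * x * g) h
    simpa [mul_assoc] using h2
  have hmul : ∀ x y : W, (g * x * g⁻¹) * (g * y * g⁻¹) = g * (x * y) * g⁻¹ := by
    intro x y
    simp [mul_assoc]
  by_cases hc : ∀ a ∈ k, ∀ b ∈ k, a ≠ b → a * b = b * a
  · have hc' : ∀ a ∈ k.image (fun c => g * c * g⁻¹), ∀ b ∈ k.image (fun c => g * c * g⁻¹),
        a ≠ b → a * b = b * a := by
      intro a ha b hb hab
      obtain ⟨x, hx, rfl⟩ := Finset.mem_image.mp ha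
      obtain ⟨y, hy, rfl⟩ := Finset.mem_image.mp hb
      have hxy : x ≠ y := fun h => hab (by rw [h])
      rw [hmul, hmul, hc x hx y hy hxy]
    rw [acProd, acProd, dif_pos hc, dif_pos hc']
    have c2 : (↑k : Set W).Pairwise (Function.onFun Commute (fun c => g * c * g⁻¹)) := by
      intro x hx y hy hxy
      simp only [Function.onFun, commute_iff_eq]
      rw [hmul, hmul, hc x hx y hy hxy]
    erw [noncommProd_image_of_injective _ he k _ c2]
    have hmap := Finset.map_noncommProd k id (fun a ha b hb hab =>
      commute_iff_eq (id a) (id b) |>.mpr (hc a ha b hb hab)) (MulAut.conj g)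
    rw [Finset.noncommProd_congr rfl
      (fun x _ => (MulAut.conj_apply g x).symm : ∀ x ∈ k, (fun c => g * c * g⁻¹) x = _) c2]
    exact hmap.symm.trans (by simp)
  · have hc' : ¬ ∀ a ∈ k.image (fun c => g * c * g⁻¹), ∀ b ∈ k.image (fun c => g * c * g⁻¹),
        a ≠ b → a * b = b * a := by
      intro hcc
      apply hc
      intro a ha b hb hab
      have h2 := hcc _ (Finset.mem_image_of_mem _ ha) _ (Finset.mem_image_of_mem _ hb)
        (fun h => hab (he h))
      rw [hmul, hmul] at h2
      have h3 := congrArg (fun x => g⁻¹ * x * g) h2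
      simpa [mul_assoc] using h3
    rw [acProd, acProd, dif_neg hc, dif_neg hc']
    simp

theorem sepSet_finite (hra : M.IsRightAngled) (u w : W) : (sepSet cs u w).Finite :=
  Set.Finite.subset (leftInv_finite cs hra u) (fun t ht => ⟨ht.1, ht.2.1⟩)

end RAHelper


/-- **The second antichain correspondence in Case 2 of the proof of Proposition 5.1.**
If `ℓ(s*u) < ℓ(u)` and `ℓ(s*w) > ℓ(w)`, then `k ↦ k^s = {s*c*s : c ∈ k}` is a
bijection from the antichains of `P(1|u,s*w)` not containing `s` onto the antichains
of `P(1|s*u,w)`; moreover for corresponding antichains `h = k^s` one has `#k = #h`,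
`ht(k) = ht(h) + 1`, and `s · ∏_{t∈k} t = (∏_{t∈h} t) · s`. -/
theorem antichain_conj_bijection
    {B W : Type*} [Group W] {M : CoxeterMatrix B} (cs : CoxeterSystem M W)
    (hra : M.IsRightAngled) (i : B) (u w : W)
    (hsu : cs.length (cs.simple i * u) < cs.length u)
    (hsw : cs.length w < cs.length (cs.simple i * w)) :
    Set.BijOn (fun k : Finset W => k.image (fun c => cs.simple i * c * cs.simple i))
      {k | IsAntichainIn cs u (cs.simple i * w) k ∧ cs.simple i ∉ k}
      {h | IsAntichainIn cs (cs.simple i * u) w h} ∧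
    ∀ k : Finset W, IsAntichainIn cs u (cs.simple i * w) k → cs.simple i ∉ k →
      (k.image (fun c => cs.simple i * c * cs.simple i)).card = k.card ∧
      acHeight cs u (cs.simple i * w) k =
        acHeight cs (cs.simple i * u) w
          (k.image (fun c => cs.simple i * c * cs.simple i)) + 1 ∧
      cs.simple i * acProd k =
        acProd (k.image (fun c => cs.simple i * c * cs.simple i)) * cs.simple i := by

  classical
  have hff : ∀ x : W, cs.simple i * (cs.simple i * x * cs.simple i) * cs.simple i = x :=
    RAHelper.conj_cancel cs i
  have finj : Function.Injective (fun c : W => cs.simple i * c * cs.simple i) := by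
    intro a b h
    have h2 : cs.simple i * (cs.simple i * a * cs.simple i) * cs.simple i
        = cs.simple i * (cs.simple i * b * cs.simple i) * cs.simple i := by
      rw [show cs.simple i * a * cs.simple i = cs.simple i * b * cs.simple i from h]
    rwa [hff, hff] at h2
  have hfm : ∀ p q : W, (cs.simple i * p * cs.simple i) * (cs.simple i * q * cs.simple i)
      = cs.simple i * (p * q) * cs.simple i := by
    intro p q
    simp [mul_assoc, cs.simple_mul_simple_cancel_left]
  have main : ∀ k : Finset W, IsAntichainIn cs u (cs.simple i * w) k → cs.simple i ∉ k →
      IsAntichainIn cs (cs.simple i * u) w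
        (k.image (fun c => cs.simple i * c * cs.simple i)) := by
    intro k hk hsk
    obtain ⟨hsub, hcomm, hinc⟩ := hk
    have hnec : ∀ c ∈ k, c ≠ cs.simple i := fun c hc h => hsk (h ▸ hc)
    have hrefl : ∀ c ∈ k, cs.IsReflection c := fun c hc => (hsub hc).1
    refine ⟨?_, ?_, ?_⟩
    · intro x hx
      obtain ⟨c, hc, rfl⟩ := Finset.mem_image.mp hx
      exact (RAHelper.mem_sepSet_conj_iff cs hra i (hrefl c hc) (hnec c hc) u w).mp (hsub hc)
    · intro a ha b hb
      obtain ⟨x, hx, rfl⟩ := Finset.mem_image.mp ha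
      obtain ⟨y, hy, rfl⟩ := Finset.mem_image.mp hb
      rw [hfm, hfm, hcomm x hx y hy]
    · intro a ha b hb hab hlt
      obtain ⟨x, hx, rfl⟩ := Finset.mem_image.mp ha
      obtain ⟨y, hy, rfl⟩ := Finset.mem_image.mp hb
      have hxy : x ≠ y := fun h => hab (by rw [h])
      apply hinc x hx y hy hxy
      exact ⟨(RAHelper.wallLE_conj_iff cs hra i (hrefl x hx) (hrefl y hy) (hnec x hx)
        (hnec y hy)).mpr hlt.1, hxy⟩
  have rev : ∀ h : Finset W, IsAntichainIn cs (cs.simple i * u) w h →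
      IsAntichainIn cs u (cs.simple i * w)
        (h.image (fun c => cs.simple i * c * cs.simple i)) ∧
      cs.simple i ∉ h.image (fun c => cs.simple i * c * cs.simple i) := by
    intro h hh
    obtain ⟨hsub, hcomm, hinc⟩ := hh
    have hnec : ∀ c ∈ h, c ≠ cs.simple i := fun c hc heq =>
      RAHelper.simple_not_mem_sepSet cs hsu w (heq ▸ hsub hc)
    have hrefl : ∀ c ∈ h, cs.IsReflection c := fun c hc => (hsub hc).1
    constructor
    · refine ⟨?_, ?_, ?_⟩
      · intro x hx
        obtain ⟨c, hc, rfl⟩ := Finset.mem_image.mp hx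
        have h1 := RAHelper.mem_sepSet_conj_iff cs hra i
          (RAHelper.isReflection_simple_conj cs (hrefl c hc))
          (RAHelper.simple_conj_ne cs (hnec c hc)) u w
        rw [hff c] at h1
        exact h1.mpr (hsub hc)
      · intro a ha b hb
        obtain ⟨x, hx, rfl⟩ := Finset.mem_image.mp ha
        obtain ⟨y, hy, rfl⟩ := Finset.mem_image.mp hb
        rw [hfm, hfm, hcomm x hx y hy]
      · intro a ha b hb hab hlt
        obtain ⟨x, hx, rfl⟩ := Finset.mem_image.mp ha
        obtain ⟨y, hy, rfl⟩ := Finset.mem_image.mp hb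
        have hxy : x ≠ y := fun hq => hab (by rw [hq])
        apply hinc x hx y hy hxy
        have h2 := (RAHelper.wallLE_conj_iff cs hra i
          (RAHelper.isReflection_simple_conj cs (hrefl x hx))
          (RAHelper.isReflection_simple_conj cs (hrefl y hy))
          (RAHelper.simple_conj_ne cs (hnec x hx))
          (RAHelper.simple_conj_ne cs (hnec y hy))).mp hlt.1
        rw [hff x, hff y] at h2
        exact ⟨h2, hxy⟩
    · intro hc
      obtain ⟨c, hcm, hceq⟩ := Finset.mem_image.mp hc
      apply hnec c hcm
      have h2 : cs.simple i * (cs.simple i * c * cs.simple i) * cs.simple i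
          = cs.simple i * cs.simple i * cs.simple i := by
        rw [show cs.simple i * c * cs.simple i = cs.simple i from hceq]
      rw [hff c] at h2
      rw [h2]
      simp [mul_assoc, cs.simple_mul_simple_cancel_left, cs.simple_mul_simple_self]
  refine ⟨⟨?_, ?_, ?_⟩, ?_⟩
  · intro k hk
    exact main k hk.1 hk.2
  · intro k1 _ k2 _ h
    exact Finset.image_injective finj h
  · intro h hh
    refine ⟨h.image (fun c => cs.simple i * c * cs.simple i),
      ⟨(rev h hh).1, (rev h hh).2⟩, ?_⟩
    show (h.image _).image _ = h
    rw [Finset.image_image]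
    rw [show h.image ((fun c => cs.simple i * c * cs.simple i) ∘
        (fun c => cs.simple i * c * cs.simple i)) = h.image id from
      Finset.image_congr (fun x _ => hff x)]
    exact Finset.image_id
  · intro k hk hsk
    have hnec : ∀ c ∈ k, c ≠ cs.simple i := fun c hc h => hsk (h ▸ hc)
    have hrefl : ∀ c ∈ k, cs.IsReflection c := fun c hc => (hk.1 hc).1
    refine ⟨Finset.card_image_of_injective k finj, ?_, ?_⟩
    · -- heights
      have hKeq : {t' | t' ∈ sepSet cs u (cs.simple i * w) ∧ ∀ t ∈ k, ¬ wallLT cs t t'}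
          = insert (cs.simple i) ((fun c => cs.simple i * c * cs.simple i) ''
            {t' | t' ∈ sepSet cs (cs.simple i * u) w ∧
              ∀ t ∈ k.image (fun c => cs.simple i * c * cs.simple i), ¬ wallLT cs t t'}) := by
        ext t'
        simp only [Set.mem_insert_iff, Set.mem_image, Set.mem_setOf_eq]
        constructor
        · rintro ⟨hsep, hnolt⟩
          by_cases hts : t' = cs.simple i
          · left; exact hts
          · right
            refine ⟨cs.simple i * t' * cs.simple i, ⟨?_, ?_⟩, hff t'⟩
            · exact (RAHelper.mem_sepSet_conj_iff cs hra i hsep.1 hts u w).mp hsep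
            · intro t ht hlt
              obtain ⟨c, hc, rfl⟩ := Finset.mem_image.mp ht
              apply hnolt c hc
              refine ⟨(RAHelper.wallLE_conj_iff cs hra i (hrefl c hc) hsep.1 (hnec c hc)
                hts).mpr hlt.1, ?_⟩
              intro hce
              exact hlt.2 (by rw [hce])
        · rintro (rfl | ⟨x, ⟨hxsep, hxnolt⟩, rfl⟩)
          · refine ⟨RAHelper.simple_mem_sepSet cs hsu hsw, ?_⟩
            intro t ht hlt
            exact RAHelper.not_wallLE_simple cs (hrefl t ht) (hnec t ht) hlt.1
          · have hxrefl : cs.IsReflection x := hxsep.1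
            have hxne : x ≠ cs.simple i := fun h =>
              RAHelper.simple_not_mem_sepSet cs hsu w (h ▸ hxsep)
            constructor
            · have h1 := RAHelper.mem_sepSet_conj_iff cs hra i
                (RAHelper.isReflection_simple_conj cs hxrefl)
                (RAHelper.simple_conj_ne cs hxne) u w
              rw [hff x] at h1
              exact h1.mpr hxsep
            · intro t ht hlt
              apply hxnolt _ (Finset.mem_image_of_mem _ ht)
              have h2 := (RAHelper.wallLE_conj_iff cs hra i (hrefl t ht)
                (RAHelper.isReflection_simple_conj cs hxrefl) (hnec t ht)
                (RAHelper.simple_conj_ne cs hxne)).mp hlt.1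
              rw [hff x] at h2
              refine ⟨h2, ?_⟩
              intro hq
              apply hlt.2
              have h3 : cs.simple i * (cs.simple i * t * cs.simple i) * cs.simple i
                  = cs.simple i * x * cs.simple i := by rw [hq]
              rw [hff t] at h3
              exact h3
      have hHfin : {t' | t' ∈ sepSet cs (cs.simple i * u) w ∧
          ∀ t ∈ k.image (fun c => cs.simple i * c * cs.simple i), ¬ wallLT cs t t'}.Finite :=
        (RAHelper.sepSet_finite cs hra (cs.simple i * u) w).subset (fun t ht => ht.1)
      have hsnot : cs.simple i ∉ ((fun c => cs.simple i * c * cs.simple i) ''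
          {t' | t' ∈ sepSet cs (cs.simple i * u) w ∧
            ∀ t ∈ k.image (fun c => cs.simple i * c * cs.simple i), ¬ wallLT cs t t'}) := by
        rintro ⟨x, hx, hxe⟩
        have h2 : cs.simple i * (cs.simple i * x * cs.simple i) * cs.simple i
            = cs.simple i * cs.simple i * cs.simple i := by
          rw [show cs.simple i * x * cs.simple i = cs.simple i from hxe]
        rw [hff x] at h2
        have hxs : x = cs.simple i := by
          rw [h2]
          simp [mul_assoc, cs.simple_mul_simple_cancel_left, cs.simple_mul_simple_self]
        exact RAHelper.simple_not_mem_sepSet cs hsu w (hxs ▸ hx.1)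
      show Set.ncard _ = Set.ncard _ + 1
      rw [hKeq, Set.ncard_insert_of_notMem hsnot ((hHfin.image _)),
        Set.ncard_image_of_injective _ finj]
    · -- products
      have h1 := RAHelper.acProd_conj (cs.simple i) k
      simp only [cs.inv_simple] at h1
      rw [h1, mul_assoc (cs.simple i * acProd k) (cs.simple i) (cs.simple i),
        cs.simple_mul_simple_self, mul_one]
end
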